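/- The language P₂ over the alphabet {a,b,c,d}, generated by the context-free grammar with single nonterminal S and productions S → λ, S → aSc, S → bSd (equivalently, the set of all words a^{i₁} b^{j₁} a^{i₂} b^{j₂} ⋯ a^{iₖ} b^{jₖ} d^{jₖ} c^{iₖ} ⋯ d^{j₂} c^{i₂} d^{j₁} c^{i₁} with k ≥ 0, i₁, jₖ ≥ 0, i₂,…,iₖ > 0 and j₁,…,j_{k−1} > 0), is not accepted by any nrNFAwtl. -/

import Mathlib

/-- The end-of-tape behaviour of a non-returning automaton with translucent
letters: either a set of states to continue with (the empty set meaning that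
the transition is undefined), or the operation `Accept`. -/
inductive EndMove (Q : Type) where
  | cont : Set Q → EndMove Q
  | accept : EndMove Q

/-- A nondeterministic finite automaton with translucent letters (NFAwtl).
`τ q` is the set of letters that are translucent for state `q`. -/
structure NFAwtl (Q : Type) (A : Type) where
  τ : Q → Set A
  I : Set Q
  F : Set Q
  δ : Q → A → Set Q
  tr_compat : ∀ q a, a ∈ τ q → δ q a = ∅

namespace NFAwtl

variable {Q A : Type}

/-- A single computation step of an NFAwtl: the first letter (from the left)
that is not translucent for the current state is read and deleted. -/
inductive Step (M : NFAwtl Q A) : Q × List A → Q × List A → Prop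
  | read (q q' : Q) (u v : List A) (a : A) :
      (∀ b ∈ u, b ∈ M.τ q) → a ∉ M.τ q → q' ∈ M.δ q a →
      Step M (q, u ++ a :: v) (q', u ++ v)

/-- The language accepted by an NFAwtl: words from which some computation
reaches a configuration whose remaining tape contents is translucent for a
final state. -/
def lang (M : NFAwtl Q A) : Set (List A) :=
  { w | ∃ q₀ ∈ M.I, ∃ q w', Relation.ReflTransGen (Step M) (q₀, w) (q, w') ∧
        (∀ b ∈ w', b ∈ M.τ q) ∧ q ∈ M.F }

/-- An NFAwtl is deterministic (a DFAwtl) if it has a single initial state and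
at most one transition for each state/letter pair. -/
def IsDet (M : NFAwtl Q A) : Prop :=
  (∃ q, M.I = {q}) ∧ ∀ q a, (M.δ q a).Subsingleton

end NFAwtl

/-- A configuration of a non-returning automaton with translucent letters:
`conf x q w` means the tape contains `x ++ w` followed by the end-of-tape
marker, the current state is `q`, and the head is positioned at the first
letter of `w`; `accept` is the accepting halting configuration. -/
inductive NrConf (Q : Type) (A : Type) where
  | conf : List A → Q → List A → NrConf Q A
  | accept : NrConf Q A

/-- A non-returning nondeterministic finite automaton with translucent
letters (nrNFAwtl). -/
structure NrNFAwtl (Q : Type) (A : Type) where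
  τ : Q → Set A
  I : Set Q
  δ : Q → A → Set Q
  δend : Q → EndMove Q
  tr_compat : ∀ q a, a ∈ τ q → δ q a = ∅

namespace NrNFAwtl

variable {Q A : Type}

/-- A single computation step of an nrNFAwtl. -/
inductive Step (M : NrNFAwtl Q A) : NrConf Q A → NrConf Q A → Prop
  | read (x : List A) (q q' : Q) (u v : List A) (a : A) :
      (∀ b ∈ u, b ∈ M.τ q) → a ∉ M.τ q → q' ∈ M.δ q a →
      Step M (.conf x q (u ++ a :: v)) (.conf (x ++ u) q' v)
  | restart (x w : List A) (q q' : Q) (S : Set Q) :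
      (∀ b ∈ w, b ∈ M.τ q) → M.δend q = .cont S → q' ∈ S →
      Step M (.conf x q w) (.conf [] q' (x ++ w))
  | accept (x w : List A) (q : Q) :
      (∀ b ∈ w, b ∈ M.τ q) → M.δend q = .accept →
      Step M (.conf x q w) .accept

/-- The language accepted by an nrNFAwtl. -/
def lang (M : NrNFAwtl Q A) : Set (List A) :=
  { w | ∃ q₀ ∈ M.I, Relation.ReflTransGen (Step M) (.conf [] q₀ w) .accept }

/-- An nrNFAwtl is deterministic (an nrDFAwtl) if it has a single initial
state and, for every state and every letter (including the end-of-tape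
marker), at most one transition is available. -/
def IsDet (M : NrNFAwtl Q A) : Prop :=
  (∃ q, M.I = {q}) ∧ (∀ q a, (M.δ q a).Subsingleton) ∧
  (∀ q S, M.δend q = .cont S → S.Subsingleton)

end NrNFAwtl

/-- `L` is accepted by some NFAwtl. -/
def AcceptedByNFAwtl {A : Type} [Fintype A] (L : Set (List A)) : Prop :=
  ∃ (Q : Type) (_ : Fintype Q) (M : NFAwtl Q A), M.lang = L

/-- `L` is accepted by some DFAwtl. -/
def AcceptedByDFAwtl {A : Type} [Fintype A] (L : Set (List A)) : Prop :=
  ∃ (Q : Type) (_ : Fintype Q) (M : NFAwtl Q A), M.IsDet ∧ M.lang = L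

/-- `L` is accepted by some nrNFAwtl. -/
def AcceptedByNrNFAwtl {A : Type} [Fintype A] (L : Set (List A)) : Prop :=
  ∃ (Q : Type) (_ : Fintype Q) (M : NrNFAwtl Q A), M.lang = L

/-- `L` is accepted by some nrDFAwtl. -/
def AcceptedByNrDFAwtl {A : Type} [Fintype A] (L : Set (List A)) : Prop :=
  ∃ (Q : Type) (_ : Fintype Q) (M : NrNFAwtl Q A), M.IsDet ∧ M.lang = L

/-- The four-letter alphabet `{a, b, c, d}`. -/
inductive Γ4 : Type
  | a | b | c | d
deriving DecidableEq

instance : Fintype Γ4 where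
  elems := {Γ4.a, Γ4.b, Γ4.c, Γ4.d}
  complete := fun x => by cases x <;> simp

/-- The language `P₂` generated by the context-free grammar with productions
`S → λ`, `S → aSc`, `S → bSd`. -/
inductive P2 : List Γ4 → Prop
  | nil : P2 []
  | ac {w : List Γ4} : P2 w → P2 (Γ4.a :: (w ++ [Γ4.c]))
  | bd {w : List Γ4} : P2 w → P2 (Γ4.b :: (w ++ [Γ4.d]))

namespace P2aux

open Γ4 List

def σ4 : Γ4 → Γ4 | .a => .c | .b => .d | .c => .c | .d => .d

def abOnly (u : List Γ4) : Prop := ∀ x ∈ u, x = Γ4.a ∨ x = Γ4.b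

lemma char_of_P2 {w : List Γ4} (h : P2 w) :
    ∃ u, abOnly u ∧ w = u ++ (u.reverse.map σ4) := by
  induction h with
  | nil => exact ⟨[], by simp [abOnly], rfl⟩
  | ac _ ih =>
    obtain ⟨u, hab, rfl⟩ := ih
    refine ⟨Γ4.a :: u, ?_, ?_⟩
    · intro x hx
      rcases List.mem_cons.1 hx with rfl | hx
      · exact Or.inl rfl
      · exact hab _ hx
    · simp [σ4]
  | bd _ ih =>
    obtain ⟨u, hab, rfl⟩ := ih
    refine ⟨Γ4.b :: u, ?_, ?_⟩
    · intro x hx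
      rcases List.mem_cons.1 hx with rfl | hx
      · exact Or.inr rfl
      · exact hab _ hx
    · simp [σ4]

lemma P2_of_char {u : List Γ4} (hab : abOnly u) :
    P2 (u ++ (u.reverse.map σ4)) := by
  induction u with
  | nil => exact P2.nil
  | cons x u ih =>
    have hu : abOnly u := fun y hy => hab y (by simp [hy])
    have h := ih hu
    have hx := hab x (by simp)
    rcases hx with rfl | rfl
    · have := P2.ac h
      simpa [σ4, List.append_assoc] using this
    · have := P2.bd h
      simpa [σ4, List.append_assoc] using this

lemma even_length_of_P2 {w : List Γ4} (h : P2 w) : Even w.length := by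
  obtain ⟨u, _, rfl⟩ := char_of_P2 h
  refine ⟨u.length, ?_⟩
  simp [List.length_append]

/-- split of a word at the ab/cd frontier is unique -/
lemma split_unique {u v u' v' : List Γ4}
    (h : u ++ v = u' ++ v')
    (hu : abOnly u) (hu' : abOnly u')
    (hv : ∀ x ∈ v, ¬(x = Γ4.a ∨ x = Γ4.b))
    (hv' : ∀ x ∈ v', ¬(x = Γ4.a ∨ x = Γ4.b)) :
    u = u' ∧ v = v' := by
  rcases List.append_eq_append_iff.1 h with ⟨t, rfl, rfl⟩ | ⟨t, rfl, rfl⟩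
  · rcases t with _ | ⟨x, t⟩
    · simp
    · exact absurd (hu' x (by simp)) (hv x (by simp))
  · rcases t with _ | ⟨x, t⟩
    · simp
    · exact absurd (hu x (by simp)) (hv' x (by simp))

lemma ab_prefix_abOnly (p q : ℕ) :
    abOnly (replicate p Γ4.a ++ [Γ4.b] ++ replicate q Γ4.a) := by
  intro x hx
  simp only [mem_append, mem_replicate, mem_singleton] at hx
  rcases hx with (⟨_, rfl⟩ | rfl) | ⟨_, rfl⟩ <;> simp

lemma cd_suffix_not_ab (r s : ℕ) :
    ∀ x ∈ replicate r Γ4.c ++ [Γ4.d] ++ replicate s Γ4.c,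
      ¬(x = Γ4.a ∨ x = Γ4.b) := by
  intro x hx
  simp only [mem_append, mem_replicate, mem_singleton] at hx
  rcases hx with (⟨_, rfl⟩ | rfl) | ⟨_, rfl⟩ <;> simp

lemma map_not_ab {u : List Γ4} (hu : abOnly u) :
    ∀ x ∈ u.reverse.map σ4, ¬(x = Γ4.a ∨ x = Γ4.b) := by
  intro x hx
  simp only [mem_map, mem_reverse] at hx
  obtain ⟨y, hy, rfl⟩ := hx
  rcases hu y hy with rfl | rfl <;> simp [σ4]

lemma c_split {r s q p : ℕ}
    (h : replicate r Γ4.c ++ Γ4.d :: replicate s Γ4.c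
       = replicate q Γ4.c ++ Γ4.d :: replicate p Γ4.c) :
    r = q ∧ s = p := by
  induction r generalizing q with
  | zero =>
    cases q with
    | zero =>
      simp only [replicate, nil_append, cons.injEq] at h
      refine ⟨rfl, ?_⟩
      have := congrArg List.length h.2; simpa using this
    | succ q => simp [replicate_succ] at h
  | succ r ih =>
    cases q with
    | zero => simp [replicate_succ] at h
    | succ q =>
      simp only [replicate_succ, cons_append, cons.injEq] at h
      obtain ⟨r', s'⟩ := ih h.2
      exact ⟨by omega, s'⟩

lemma shape_P2 {p q r s : ℕ}
    (h : P2 (replicate p Γ4.a ++ [Γ4.b] ++ replicate q Γ4.a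
          ++ (replicate r Γ4.c ++ [Γ4.d] ++ replicate s Γ4.c))) :
    p = s ∧ q = r := by
  obtain ⟨u, hab, heq⟩ := char_of_P2 h
  have hsplit := split_unique (u := replicate p Γ4.a ++ [Γ4.b] ++ replicate q Γ4.a)
    (v := replicate r Γ4.c ++ [Γ4.d] ++ replicate s Γ4.c)
    (u' := u) (v' := u.reverse.map σ4)
    (by rw [← heq]; try simp [List.append_assoc])
    (ab_prefix_abOnly p q) hab (cd_suffix_not_ab r s) (map_not_ab hab)
  obtain ⟨hu, hv⟩ := hsplit
  rw [← hu] at hv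
  have hmap : ((replicate p Γ4.a ++ [Γ4.b] ++ replicate q Γ4.a).reverse.map σ4)
      = replicate q Γ4.c ++ Γ4.d :: replicate p Γ4.c := by
    simp [List.reverse_append, List.map_append, List.map_replicate, σ4]
  rw [hmap] at hv
  have := c_split (by simpa [List.append_assoc] using hv.symm)
  omega

end P2aux

namespace NrAux

open List

variable {Q A : Type}

structure Cfg (Q A : Type) where
  x : List (ℕ × A)
  q : Q
  w : List (ℕ × A)

variable (M : NrNFAwtl Q A)

def OKl (q : Q) (l : List (ℕ × A)) : Prop := ∀ e ∈ l, (e : ℕ × A).2 ∈ M.τ q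

inductive LStep : Cfg Q A → Cfg Q A → Prop
  | read (x : List (ℕ × A)) (q q' : Q) (u v : List (ℕ × A)) (p : ℕ) (a : A) :
      OKl M q u → a ∉ M.τ q → q' ∈ M.δ q a →
      LStep ⟨x, q, u ++ (p, a) :: v⟩ ⟨x ++ u, q', v⟩
  | restart (x w : List (ℕ × A)) (q q' : Q) (S : Set Q) :
      OKl M q w → M.δend q = .cont S → q' ∈ S →
      LStep ⟨x, q, w⟩ ⟨[], q', x ++ w⟩

def AcceptC (C : Cfg Q A) : Prop := OKl M C.q C.w ∧ M.δend C.q = .accept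

def tape (C : Cfg Q A) : List (ℕ × A) := C.x ++ C.w

def RunTo (f : ℕ → Cfg Q A) (n : ℕ) : Prop := ∀ i, i < n → LStep M (f i) (f (i + 1))

def proj (C : Cfg Q A) : NrConf Q A :=
  .conf (C.x.map Prod.snd) C.q (C.w.map Prod.snd)

lemma proj_step {C D : Cfg Q A} (h : LStep M C D) :
    NrNFAwtl.Step M (proj C) (proj D) := by
  cases h with
  | read x q q' u v p a hu ha hq =>
    have : NrNFAwtl.Step M (.conf (x.map Prod.snd) q ((u.map Prod.snd) ++ a :: (v.map Prod.snd)))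
        (.conf ((x.map Prod.snd) ++ (u.map Prod.snd)) q' (v.map Prod.snd)) :=
      NrNFAwtl.Step.read _ _ _ _ _ _ (by
        intro b hb
        obtain ⟨e, he, rfl⟩ := List.mem_map.1 hb
        exact hu e he) ha hq
    simpa [proj, List.map_append] using this
  | restart x w q q' S hw hend hq =>
    have : NrNFAwtl.Step M (.conf (x.map Prod.snd) q (w.map Prod.snd))
        (.conf [] q' ((x.map Prod.snd) ++ (w.map Prod.snd))) :=
      NrNFAwtl.Step.restart _ _ _ _ _ (by
        intro b hb
        obtain ⟨e, he, rfl⟩ := List.mem_map.1 hb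
        exact hw e he) hend hq
    simpa [proj, List.map_append] using this

lemma proj_accept {C : Cfg Q A} (h : AcceptC M C) :
    NrNFAwtl.Step M (proj C) .accept := by
  refine NrNFAwtl.Step.accept _ _ _ ?_ h.2
  intro b hb
  obtain ⟨e, he, rfl⟩ := List.mem_map.1 hb
  exact h.1 e he

lemma run_rtg {f : ℕ → Cfg Q A} {n : ℕ} (hrun : RunTo M f n) :
    ∀ i, i ≤ n → Relation.ReflTransGen (NrNFAwtl.Step M) (proj (f 0)) (proj (f i)) := by
  intro i
  induction i with
  | zero => intro _; exact .refl
  | succ i ih =>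
    intro hi
    exact .tail (ih (by omega)) (proj_step M (hrun i (by omega)))

lemma run_lang {f : ℕ → Cfg Q A} {n : ℕ} (hrun : RunTo M f n) (hacc : AcceptC M (f n))
    {q₀ : Q} (hq₀ : q₀ ∈ M.I) (hx : (f 0).x = []) (hq : (f 0).q = q₀) :
    ((f 0).w.map Prod.snd) ∈ M.lang := by
  refine ⟨q₀, hq₀, ?_⟩
  have h0 : proj (f 0) = .conf [] q₀ ((f 0).w.map Prod.snd) := by
    simp [proj, hx, hq]
  rw [← h0]
  exact .tail (run_rtg M hrun n le_rfl) (proj_accept M hacc)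

lemma map_eq_append_cons {lw : List (ℕ × A)} {u v : List A} {a : A}
    (h : lw.map Prod.snd = u ++ a :: v) :
    ∃ lu p lv, lw = lu ++ (p, a) :: lv ∧ lu.map Prod.snd = u ∧ lv.map Prod.snd = v := by
  induction lw generalizing u with
  | nil => simp at h
  | cons e lw ih =>
    cases u with
    | nil =>
      simp at h
      exact ⟨[], e.1, lw, by simp [← h.1], rfl, h.2⟩
    | cons b u =>
      simp at h
      obtain ⟨lu, p, lv, rfl, h1, h2⟩ := ih h.2
      exact ⟨e :: lu, p, lv, by simp, by simp [h.1, h1], h2⟩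

lemma lift_run (C : Cfg Q A)
    (h : Relation.ReflTransGen (NrNFAwtl.Step M) (proj C) .accept) :
    ∃ n f, f 0 = C ∧ RunTo M f n ∧ AcceptC M (f n) := by
  have main : ∀ (c : NrConf Q A), Relation.ReflTransGen (NrNFAwtl.Step M) c .accept →
      ∀ C : Cfg Q A, proj C = c → ∃ n f, f 0 = C ∧ RunTo M f n ∧ AcceptC M (f n) := by
    intro c hc
    induction hc using Relation.ReflTransGen.head_induction_on with
    | refl => intro C hC; simp [proj] at hC
    | head h' _ ih =>
      intro C hC
      cases h' with
      | read x q q' u v a hu ha hq =>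
        -- proj C = conf x q (u ++ a :: v)
        have hx : C.x.map Prod.snd = x := by
          have := hC; simp [proj] at this; exact this.1
        have hqq : C.q = q := by
          have := hC; simp [proj] at this; exact this.2.1
        have hw : C.w.map Prod.snd = u ++ a :: v := by
          have := hC; simp [proj] at this; exact this.2.2
        obtain ⟨lu, p, lv, hlw, hlu, hlv⟩ := map_eq_append_cons hw
        set C' : Cfg Q A := ⟨C.x ++ lu, q', lv⟩ with hC'
        have hstep : LStep M C C' := by
          have : C = ⟨C.x, q, lu ++ (p, a) :: lv⟩ := by
            cases C; simp_all
          rw [this]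
          exact LStep.read _ _ _ _ _ _ _ (by
            intro e he
            have : e.2 ∈ u := by rw [← hlu]; exact List.mem_map_of_mem he
            exact hu _ this) ha hq
        have hproj : proj C' = .conf (x ++ u) q' v := by
          simp [proj, hC', List.map_append, hx, hlu, hlv]
        obtain ⟨n, f, hf0, hfr, hfa⟩ := ih C' hproj
        refine ⟨n + 1, fun i => match i with | 0 => C | (i+1) => f i, rfl, ?_, hfa⟩
        intro i hi
        match i with
        | 0 => simpa [hf0] using hstep
        | (i+1) => exact hfr i (by omega)
      | restart x w q q' S hw hend hq =>
        have hx : C.x.map Prod.snd = x := by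
          have := hC; simp [proj] at this; exact this.1
        have hqq : C.q = q := by
          have := hC; simp [proj] at this; exact this.2.1
        have hww : C.w.map Prod.snd = w := by
          have := hC; simp [proj] at this; exact this.2.2
        set C' : Cfg Q A := ⟨[], q', C.x ++ C.w⟩ with hC'
        have hstep : LStep M C C' := by
          have hCeq : C = ⟨C.x, q, C.w⟩ := by cases C; simp_all
          rw [hCeq]
          exact LStep.restart _ _ _ _ _ (by
            intro e he
            have : e.2 ∈ w := by rw [← hww]; exact List.mem_map_of_mem he
            exact hw _ this) hend hq
        have hproj : proj C' = .conf [] q' (x ++ w) := by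
          simp [proj, hC', List.map_append, hx, hww]
        obtain ⟨n, f, hf0, hfr, hfa⟩ := ih C' hproj
        refine ⟨n + 1, fun i => match i with | 0 => C | (i+1) => f i, rfl, ?_, hfa⟩
        intro i hi
        match i with
        | 0 => simpa [hf0] using hstep
        | (i+1) => exact hfr i (by omega)
      | accept x w q hw hend =>
        have hqq : C.q = q := by
          have := hC; simp [proj] at this; exact this.2.1
        have hww : C.w.map Prod.snd = w := by
          have := hC; simp [proj] at this; exact this.2.2
        refine ⟨0, fun _ => C, rfl, by intro i hi; omega, ?_, ?_⟩
        · intro e he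
          have : e.2 ∈ w := by rw [← hww]; exact List.mem_map_of_mem he
          rw [hqq]
          exact hw _ this
        · rw [hqq]; exact hend
  exact main _ h C rfl



-- ## Part 2: tapes, sortedness, erasure, gluing

def keys (l : List (ℕ × A)) : List ℕ := l.map Prod.fst

def SortedT (l : List (ℕ × A)) : Prop := l.Pairwise (fun e f => e.1 < f.1)

lemma tape_sublist_step {C D : Cfg Q A} (h : LStep M C D) : tape D <+ tape C := by
  cases h with
  | read x q q' u v p a hu ha hq =>
    show (x ++ u) ++ v <+ x ++ (u ++ (p, a) :: v)
    rw [List.append_assoc]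
    exact (((List.sublist_cons_self (p,a) v).append_left u).append_left x)
  | restart x w q q' S hw hend hq =>
    show [] ++ (x ++ w) <+ x ++ w
    simp

lemma run_tape_mono {f : ℕ → Cfg Q A} {n : ℕ} (hrun : RunTo M f n) :
    ∀ i j, i ≤ j → j ≤ n → tape (f j) <+ tape (f i) := by
  intro i j hij hjn
  induction j with
  | zero => simp_all
  | succ j ih =>
    rcases Nat.eq_or_lt_of_le hij with rfl | hlt
    · exact List.Sublist.refl _
    · exact (tape_sublist_step M (hrun j (by omega))).trans (ih (by omega) (by omega))

lemma sorted_keys_nodup {l : List (ℕ × A)} (h : SortedT l) : (keys l).Nodup := by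
  unfold keys
  exact (List.pairwise_map.2 (h.imp (by intro a b hab; exact ne_of_lt hab)))

lemma mem_keys_of_sublist {l l' : List (ℕ × A)} (h : l <+ l') {k : ℕ} (hk : k ∈ keys l) :
    k ∈ keys l' := by
  unfold keys at *
  exact (h.map Prod.fst).mem hk

set_option linter.unusedSectionVars false

variable [DecidableEq A]

def erL (R : Finset ℕ) (l : List (ℕ × A)) : List (ℕ × A) := l.filter (fun e => e.1 ∉ R)

def erC (R : Finset ℕ) (C : Cfg Q A) : Cfg Q A := ⟨erL R C.x, C.q, erL R C.w⟩

lemma erL_sublist (R : Finset ℕ) (l : List (ℕ × A)) : erL R l <+ l :=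
  List.filter_sublist

lemma erL_append (R : Finset ℕ) (l l' : List (ℕ × A)) :
    erL R (l ++ l') = erL R l ++ erL R l' := List.filter_append _ _

lemma mem_keys_erL {R : Finset ℕ} {l : List (ℕ × A)} {k : ℕ} :
    k ∈ keys (erL R l) ↔ k ∈ keys l ∧ k ∉ R := by
  unfold keys erL
  simp only [List.mem_map, List.mem_filter]
  constructor
  · rintro ⟨e, ⟨he, hd⟩, rfl⟩
    simp only [decide_eq_true_eq] at hd
    exact ⟨⟨e, he, rfl⟩, hd⟩
  · rintro ⟨⟨e, he, rfl⟩, hd⟩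
    exact ⟨e, ⟨he, by simpa using hd⟩, rfl⟩

lemma sorted_mid {l₁ l₂ : List (ℕ × A)} {p : ℕ} {a : A}
    (h : SortedT (l₁ ++ (p, a) :: l₂)) :
    (∀ e ∈ l₁, (e : ℕ × A).1 < p) ∧ (∀ e ∈ l₂, p < (e : ℕ × A).1) := by
  unfold SortedT at h
  rw [List.pairwise_append] at h
  obtain ⟨h1, h2, h12⟩ := h
  rw [List.pairwise_cons] at h2
  exact ⟨fun e he => h12 e he (p, a) (by simp), fun e he => h2.1 e he⟩

lemma erase_step {R : Finset ℕ} {C D : Cfg Q A} (h : LStep M C D)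
    (hsort : SortedT (tape C)) (hR : ∀ r ∈ R, r ∈ keys (tape D)) :
    LStep M (erC R C) (erC R D) := by
  cases h with
  | read x q q' u v p a hu ha hq =>
    have hpR : p ∉ R := by
      intro hp
      have hmem := hR p hp
      -- tape D = (x ++ u) ++ v, all keys ≠ p by sortedness of tape C
      have hs : SortedT ((x ++ u) ++ (p, a) :: v) := by
        simpa [tape, List.append_assoc] using hsort
      obtain ⟨hlt, hgt⟩ := sorted_mid hs
      unfold keys at hmem
      simp only [List.mem_map] at hmem
      obtain ⟨e, he, hek⟩ := hmem
      have : e ∈ (x ++ u) ++ v := by simpa [tape, List.append_assoc] using he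
      rcases List.mem_append.1 this with h1 | h2
      · have := hlt e h1; omega
      · have := hgt e h2; omega
    have e1 : erL R (u ++ (p, a) :: v) = erL R u ++ (p, a) :: erL R v := by
      rw [erL_append]
      congr 1
      unfold erL
      rw [List.filter_cons]
      simp [hpR]
    have hstep := LStep.read (M := M) (erL R x) q q' (erL R u) (erL R v) p a
      (fun e he => hu e (List.mem_of_mem_filter he)) ha hq
    show LStep M (erC R ⟨x, q, u ++ (p,a) :: v⟩) (erC R ⟨x ++ u, q', v⟩)
    unfold erC
    simp only [e1, erL_append]
    exact hstep
  | restart x w q q' S hw hend hq =>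
    have hstep := LStep.restart (M := M) (erL R x) (erL R w) q q' S
      (fun e he => hw e (List.mem_of_mem_filter he)) hend hq
    show LStep M (erC R ⟨x, q, w⟩) (erC R ⟨[], q', x ++ w⟩)
    unfold erC
    simp only [erL_append]
    simpa [erL] using hstep

lemma erase_accept {R : Finset ℕ} {C : Cfg Q A} (h : AcceptC M C) :
    AcceptC M (erC R C) :=
  ⟨fun e he => h.1 e (List.mem_of_mem_filter he), h.2⟩

lemma subdet {LL : List (ℕ × A)} (hnd : (keys LL).Nodup) :
    ∀ {l₁ l₂ : List (ℕ × A)}, l₁ <+ LL → l₂ <+ LL →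
    (∀ k, k ∈ keys l₁ ↔ k ∈ keys l₂) → l₁ = l₂ := by
  induction LL with
  | nil =>
    intro l₁ l₂ h₁ h₂ _
    rw [List.sublist_nil.1 h₁, List.sublist_nil.1 h₂]
  | cons e LL ih =>
    intro l₁ l₂ h₁ h₂ hiff
    have hnd' : (keys LL).Nodup := by
      unfold keys at *; simpa using hnd.of_cons
    have hend : e.1 ∉ keys LL := by
      unfold keys at *
      simp only [List.map_cons, List.nodup_cons] at hnd
      exact hnd.1
    rcases List.sublist_cons_iff.1 h₁ with h₁' | ⟨t₁, rfl, h₁'⟩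
    · rcases List.sublist_cons_iff.1 h₂ with h₂' | ⟨t₂, rfl, h₂'⟩
      · exact ih hnd' h₁' h₂' hiff
      · exfalso
        have : e.1 ∈ keys l₁ := (hiff e.1).2 (by unfold keys; simp)
        exact hend (mem_keys_of_sublist h₁' this)
    · rcases List.sublist_cons_iff.1 h₂ with h₂' | ⟨t₂, rfl, h₂'⟩
      · exfalso
        have : e.1 ∈ keys l₂ := (hiff e.1).1 (by unfold keys; simp)
        exact hend (mem_keys_of_sublist h₂' this)
      · congr 1
        refine ih hnd' h₁' h₂' ?_
        intro k
        constructor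
        · intro hk
          have hk1 : k ∈ keys (e :: t₁) := by unfold keys at *; simp at hk ⊢; tauto
          have := (hiff k).1 hk1
          unfold keys at this ⊢
          simp only [List.map_cons, List.mem_cons] at this
          rcases this with rfl | h
          · exact absurd (mem_keys_of_sublist h₁' hk) hend
          · exact h
        · intro hk
          have hk1 : k ∈ keys (e :: t₂) := by unfold keys at *; simp at hk ⊢; tauto
          have := (hiff k).2 hk1
          unfold keys at this ⊢
          simp only [List.map_cons, List.mem_cons] at this
          rcases this with rfl | h
          · exact absurd (mem_keys_of_sublist h₂' hk) hend
          · exact h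


lemma erase_run {f : ℕ → Cfg Q A} {n : ℕ} (hrun : RunTo M f n) (hacc : AcceptC M (f n))
    (hsorted : ∀ i, i ≤ n → SortedT (tape (f i)))
    (R : Finset ℕ) (hR : ∀ r ∈ R, r ∈ keys (tape (f n))) :
    RunTo M (fun i => erC R (f i)) n ∧ AcceptC M (erC R (f n)) := by
  constructor
  · intro i hi
    refine erase_step M (hrun i hi) (hsorted i (by omega)) ?_
    intro r hr
    exact mem_keys_of_sublist (run_tape_mono M hrun (i+1) n (by omega) le_rfl) (hR r hr)
  · exact erase_accept M hacc

lemma nodup_tape_keys {f : ℕ → Cfg Q A} {n : ℕ}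
    (hsorted : ∀ i, i ≤ n → SortedT (tape (f i))) {i : ℕ} (hi : i ≤ n) :
    (keys (f i).x ++ keys (f i).w).Nodup := by
  have := sorted_keys_nodup (hsorted i hi)
  unfold keys tape at *
  simpa [List.map_append] using this

lemma glue {f : ℕ → Cfg Q A} {n : ℕ} (hrun : RunTo M f n) (hacc : AcceptC M (f n))
    (hsorted : ∀ i, i ≤ n → SortedT (tape (f i)))
    {t t' : ℕ} (htt : t ≤ t') (ht'n : t' ≤ n)
    (hx : (f t).x = (f t').x) (hq : (f t).q = (f t').q)
    {R : Finset ℕ}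
    (hRdef : ∀ k, k ∈ R ↔ (k ∈ keys (tape (f t)) ∧ k ∉ keys (tape (f t')))) :
    ∃ g : ℕ → Cfg Q A, ∃ m : ℕ,
      RunTo M g m ∧ AcceptC M (g m) ∧ g 0 = erC R (f 0) := by
  have hmono := run_tape_mono M hrun
  -- key: erC R (f t) = f t'
  have hxer : erL R (f t).x = (f t).x := by
    unfold erL
    rw [List.filter_eq_self]
    intro e he
    simp only [decide_eq_true_eq]
    intro heR
    have := ((hRdef e.1).1 heR).2
    apply this
    apply mem_keys_of_sublist (l := (f t').x) (l' := tape (f t'))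
    · show (f t').x <+ (f t').x ++ (f t').w
      exact List.sublist_append_left _ _
    · rw [← hx]
      exact List.mem_map_of_mem he
  have hndt' : (keys (f t').x ++ keys (f t').w).Nodup := nodup_tape_keys hsorted ht'n
  have hndt : (keys (f t).x ++ keys (f t).w).Nodup := nodup_tape_keys hsorted (le_trans htt ht'n)
  have hwer : erL R (f t).w = (f t').w := by
    refine subdet (LL := tape (f t)) (sorted_keys_nodup (hsorted t (le_trans htt ht'n)))
      ((erL_sublist R _).trans (by exact List.sublist_append_right _ _))
      ((List.sublist_append_right _ _).trans (hmono t t' htt ht'n)) ?_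
    intro k
    rw [mem_keys_erL]
    constructor
    · rintro ⟨hk, hkR⟩
      have hk1 : k ∈ keys (tape (f t)) := by
        unfold tape keys at *
        rw [List.map_append]
        exact List.mem_append_right _ hk
      have hk2 : k ∈ keys (tape (f t')) := by
        by_contra hcon
        exact hkR ((hRdef k).2 ⟨hk1, hcon⟩)
      unfold tape keys at hk2
      rw [List.map_append] at hk2
      rcases List.mem_append.1 hk2 with h1 | h2
      · exfalso
        rw [← hx] at h1
        exact (List.disjoint_of_nodup_append hndt h1 hk).elim
      · exact h2
    · intro hk
      constructor
      · -- k ∈ keys (f t').w → k ∈ keys (f t).w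
        have hk2 : k ∈ keys (tape (f t')) := by
          unfold tape keys at *
          rw [List.map_append]; exact List.mem_append_right _ hk
        have hk1 : k ∈ keys (tape (f t)) :=
          mem_keys_of_sublist (hmono t t' htt ht'n) hk2
        unfold tape keys at hk1
        rw [List.map_append] at hk1
        rcases List.mem_append.1 hk1 with h1 | h2
        · exfalso
          rw [hx] at h1
          exact (List.disjoint_of_nodup_append hndt' h1 hk).elim
        · exact h2
      · intro hkR
        exact ((hRdef k).1 hkR).2 (by
          unfold tape keys at *
          rw [List.map_append]; exact List.mem_append_right _ hk)
  have KD : erC R (f t) = f t' := by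
    unfold erC
    rw [hxer, hwer, hx, hq]
  set d := t' - t with hd
  refine ⟨fun i => if i < t then erC R (f i) else f (i + d), n - d, ?_, ?_, ?_⟩
  · intro i hi
    by_cases h1 : i + 1 < t
    · have h0 : i < t := by omega
      simp only [if_pos h0, if_pos h1]
      refine erase_step M (hrun i (by omega)) (hsorted i (by omega)) ?_
      intro r hr
      have := ((hRdef r).1 hr).1
      exact mem_keys_of_sublist (hmono (i+1) t (by omega) (le_trans htt ht'n)) this
    · by_cases h0 : i < t
      · -- i + 1 = t
        have ht1 : i + 1 = t := by omega
        simp only [if_pos h0, if_neg h1]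
        have : f (i + 1 + d) = f t' := by rw [ht1]; congr 1; omega
        rw [this, ← KD, ← ht1]
        refine erase_step M (hrun i (by omega)) (hsorted i (by omega)) ?_
        intro r hr
        have := ((hRdef r).1 hr).1
        exact mem_keys_of_sublist (hmono (i+1) t (by omega) (le_trans htt ht'n)) this
      · simp only [if_neg h0, if_neg h1]
        have : i + 1 + d = i + d + 1 := by omega
        rw [this]
        exact hrun (i + d) (by omega)
  · have hge : ¬ (n - d < t) := by omega
    simp only [if_neg hge]
    have : n - d + d = n := by omega
    rw [this]
    exact hacc
  · by_cases h0 : 0 < t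
    · simp [h0]
    · have ht0 : t = 0 := by omega
      simp only [if_neg h0]
      have : (0 : ℕ) + d = t' := by omega
      rw [this, ← KD, ht0]

end NrAux


namespace NrAux

-- ## Part 3a : the word and its labelled version

section Word

def blkA (N : ℕ) : List (ℕ × Γ4) := (List.range' 0 N).map (fun p => (p, Γ4.a))
def blkG (N : ℕ) : List (ℕ × Γ4) := (List.range' (N+1) N).map (fun p => (p, Γ4.a))
def blkD (N : ℕ) : List (ℕ × Γ4) := (List.range' (2*N+1) N).map (fun p => (p, Γ4.c))
def blkZ (N : ℕ) : List (ℕ × Γ4) := (List.range' (3*N+2) N).map (fun p => (p, Γ4.c))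

def eW (N : ℕ) : List (ℕ × Γ4) :=
  blkA N ++ [(N, Γ4.b)] ++ blkG N ++ blkD N ++ [(3*N+1, Γ4.d)] ++ blkZ N

lemma keys_map_pair (s n : ℕ) (x : Γ4) :
    keys ((List.range' s n).map (fun p => (p, x))) = List.range' s n := by
  simp [keys, List.map_map, Function.comp_def]

lemma range'_app (s m n : ℕ) :
    List.range' s m ++ List.range' (s+m) n = List.range' s (m+n) := by
  have := List.range'_append (s := s) (m := m) (n := n) (step := 1)
  simpa [Nat.add_comm] using this

lemma keys_eW (N : ℕ) : keys (eW N) = List.range' 0 (4*N+2) := by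
  unfold eW keys blkA blkG blkD blkZ
  simp only [List.map_append]
  have kA := keys_map_pair 0 N Γ4.a
  have kG := keys_map_pair (N+1) N Γ4.a
  have kD := keys_map_pair (2*N+1) N Γ4.c
  have kZ := keys_map_pair (3*N+2) N Γ4.c
  unfold keys at kA kG kD kZ
  rw [kA, kG, kD, kZ]
  show List.range' 0 N ++ [N] ++ List.range' (N+1) N ++ List.range' (2*N+1) N
      ++ [3*N+1] ++ List.range' (3*N+2) N = List.range' 0 (4*N+2)
  have s1 : [N] = List.range' N 1 := (List.range'_one).symm
  have s2 : [3*N+1] = List.range' (3*N+1) 1 := (List.range'_one).symm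
  rw [s1, s2]
  have e1 : List.range' 0 N ++ List.range' N 1 = List.range' 0 (N+1) := by
    have := range'_app 0 N 1; simpa using this
  have e2 : List.range' 0 (N+1) ++ List.range' (N+1) N = List.range' 0 (2*N+1) := by
    have h := range'_app 0 (N+1) N
    simp only [Nat.zero_add] at h
    rw [h]; congr 1; omega
  have e3 : List.range' 0 (2*N+1) ++ List.range' (2*N+1) N = List.range' 0 (3*N+1) := by
    have h := range'_app 0 (2*N+1) N
    simp only [Nat.zero_add] at h
    rw [h]; congr 1; omega
  have e4 : List.range' 0 (3*N+1) ++ List.range' (3*N+1) 1 = List.range' 0 (3*N+2) := by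
    have h := range'_app 0 (3*N+1) 1
    simp only [Nat.zero_add] at h
    rw [h]
  have e5 : List.range' 0 (3*N+2) ++ List.range' (3*N+2) N = List.range' 0 (4*N+2) := by
    have h := range'_app 0 (3*N+2) N
    simp only [Nat.zero_add] at h
    rw [h]; congr 1; omega
  rw [e1, e2, e3, e4, e5]

lemma sorted_eW (N : ℕ) : SortedT (eW N) := by
  unfold SortedT
  have h : (keys (eW N)).Pairwise (· < ·) := by
    rw [keys_eW]
    exact List.pairwise_lt_range' (s := 0) (n := 4*N+2) 1 (by omega)
  unfold keys at h
  rw [List.pairwise_map] at h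
  exact h

lemma mem_blk {s n : ℕ} {x : Γ4} {e : ℕ × Γ4}
    (he : e ∈ (List.range' s n).map (fun p => (p, x))) :
    s ≤ e.1 ∧ e.1 < s + n ∧ e.2 = x := by
  obtain ⟨p, hp, rfl⟩ := List.mem_map.1 he
  rw [List.mem_range'_1] at hp
  exact ⟨hp.1, hp.2, rfl⟩

lemma mem_eW_cases {N : ℕ} {e : ℕ × Γ4} (he : e ∈ eW N) :
    (e.1 < N ∧ e.2 = Γ4.a) ∨ (e.1 = N ∧ e.2 = Γ4.b) ∨
    (N < e.1 ∧ e.1 ≤ 2*N ∧ e.2 = Γ4.a) ∨ (2*N < e.1 ∧ e.1 ≤ 3*N ∧ e.2 = Γ4.c) ∨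
    (e.1 = 3*N+1 ∧ e.2 = Γ4.d) ∨ (3*N+1 < e.1 ∧ e.1 < 4*N+2 ∧ e.2 = Γ4.c) := by
  unfold eW blkA blkG blkD blkZ at he
  simp only [List.mem_append, List.mem_singleton] at he
  rcases he with ((((h|h)|h)|h)|h)|h
  · have := mem_blk h; left; exact ⟨by omega, this.2.2⟩
  · right; left; rw [h]; exact ⟨rfl, rfl⟩
  · have := mem_blk h; right; right; left; exact ⟨by omega, by omega, this.2.2⟩
  · have := mem_blk h; right; right; right; left; exact ⟨by omega, by omega, this.2.2⟩
  · right; right; right; right; left; rw [h]; exact ⟨rfl, rfl⟩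
  · have := mem_blk h; right; right; right; right; right; exact ⟨by omega, by omega, this.2.2⟩

lemma countP_blk_all {s n : ℕ} {x : Γ4} {P : ℕ → Prop} [DecidablePred P]
    (h : ∀ p, s ≤ p → p < s + n → P p) :
    ((List.range' s n).map (fun p => (p, x))).countP (fun e => decide (P e.1)) = n := by
  have hlen : ((List.range' s n).map (fun p => (p, x))).length = n := by simp
  conv_rhs => rw [← hlen]
  rw [List.countP_eq_length]
  intro e he
  have := mem_blk he
  simpa using h e.1 this.1 this.2.1

lemma countP_blk_none {s n : ℕ} {x : Γ4} {P : ℕ → Prop} [DecidablePred P]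
    (h : ∀ p, s ≤ p → p < s + n → ¬ P p) :
    ((List.range' s n).map (fun p => (p, x))).countP (fun e => decide (P e.1)) = 0 := by
  rw [List.countP_eq_zero]
  intro e he
  have := mem_blk he
  simpa using h e.1 this.1 this.2.1

end Word

end NrAux

namespace NrAux

open List

section Run

set_option linter.constructorNameAsVariable false

variable {Q : Type} {M : NrNFAwtl Q Γ4} {N : ℕ} {f : ℕ → Cfg Q Γ4} {n : ℕ}

structure Ctx (M : NrNFAwtl Q Γ4) (N : ℕ) (f : ℕ → Cfg Q Γ4) (n : ℕ) : Prop where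
  hrun : RunTo M f n
  hacc : AcceptC M (f n)
  hx0 : (f 0).x = []
  hw0 : (f 0).w = eW N
  hI : (f 0).q ∈ M.I
  hlang : M.lang = {w | P2 w}

lemma Ctx.tape0 (hc : Ctx M N f n) : tape (f 0) = eW N := by
  unfold tape; rw [hc.hx0, hc.hw0]; simp

lemma Ctx.sub (hc : Ctx M N f n) {i : ℕ} (hi : i ≤ n) : tape (f i) <+ eW N := by
  rw [← hc.tape0]
  exact run_tape_mono M hc.hrun 0 i (by omega) hi

lemma Ctx.sorted (hc : Ctx M N f n) {i : ℕ} (hi : i ≤ n) : SortedT (tape (f i)) :=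
  (sorted_eW N).sublist (hc.sub hi)

lemma Ctx.mem_eW (hc : Ctx M N f n) {i : ℕ} (hi : i ≤ n) {e : ℕ × Γ4}
    (he : e ∈ tape (f i)) : e ∈ eW N :=
  (hc.sub hi).mem he

lemma Ctx.mono (hc : Ctx M N f n) {i j : ℕ} (hij : i ≤ j) (hj : j ≤ n) :
    tape (f j) <+ tape (f i) :=
  run_tape_mono M hc.hrun i j hij hj

/-- inversion of a step -/
lemma step_inv {C D : Cfg Q Γ4} (h : LStep M C D) :
    (∃ u v p a, C.w = u ++ (p, a) :: v ∧ D.x = C.x ++ u ∧ D.w = v ∧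
      OKl M C.q u ∧ a ∉ M.τ C.q) ∨
    (D.x = [] ∧ D.w = C.x ++ C.w) := by
  cases h with
  | read x q q' u v p a hu ha hq => exact Or.inl ⟨u, v, p, a, rfl, rfl, rfl, hu, ha⟩
  | restart x w q q' S hw hend hq => exact Or.inr ⟨rfl, rfl⟩

/-- data of a read step -/
def ReadD (M : NrNFAwtl Q Γ4) (f : ℕ → Cfg Q Γ4) (s : ℕ)
    (u v : List (ℕ × Γ4)) (p : ℕ) (a : Γ4) : Prop :=
  (f s).w = u ++ (p, a) :: v ∧ (f (s+1)).x = (f s).x ++ u ∧ (f (s+1)).w = v ∧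
    OKl M (f s).q u ∧ a ∉ M.τ (f s).q

def Bdy (f : ℕ → Cfg Q Γ4) (i : ℕ) : Prop := (f i).x = []

lemma tape_eq_w_of_bdy (h : Bdy f i) : tape (f i) = (f i).w := by
  unfold tape Bdy at *; rw [h]; simp

lemma step_read_of_not_bdy (hc : Ctx M N f n) {s : ℕ} (hs : s < n)
    (hnb : ¬ Bdy f (s+1)) : ∃ u v p a, ReadD M f s u v p a := by
  rcases step_inv (hc.hrun s hs) with ⟨u, v, p, a, h⟩ | ⟨h1, _⟩
  · exact ⟨u, v, p, a, h.1, h.2.1, h.2.2.1, h.2.2.2.1, h.2.2.2.2⟩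
  · exact absurd h1 hnb

lemma tape_read (hrd : ReadD M f s u v p a) :
    tape (f s) = ((f s).x ++ u) ++ (p, a) :: v ∧ tape (f (s+1)) = ((f s).x ++ u) ++ v := by
  unfold tape
  rw [hrd.1, hrd.2.1, hrd.2.2.1]
  simp [List.append_assoc]

lemma readd_kill (hc : Ctx M N f n) {s : ℕ} (hs : s < n)
    {u v p a} (hrd : ReadD M f s u v p a) : p ∉ keys (tape (f (s+1))) := by
  obtain ⟨ht, ht'⟩ := tape_read hrd
  have hsort : SortedT (tape (f s)) := hc.sorted (by omega)
  rw [ht] at hsort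
  obtain ⟨hlt, hgt⟩ := sorted_mid hsort
  rw [ht']
  intro hmem
  unfold keys at hmem
  obtain ⟨e, he, hek⟩ := List.mem_map.1 hmem
  rcases List.mem_append.1 he with h1 | h2
  · have := hlt e h1; omega
  · have := hgt e h2; omega

lemma readd_mem_w (hrd : ReadD M f s u v p a) : (p, a) ∈ (f s).w := by
  rw [hrd.1]; simp

lemma readd_mem_eW (hc : Ctx M N f n) {s : ℕ} (hs : s < n)
    {u v p a} (hrd : ReadD M f s u v p a) : (p, a) ∈ eW N :=
  hc.mem_eW (i := s) (by omega) (by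
    unfold tape
    exact List.mem_append_right _ (readd_mem_w hrd))

lemma readd_w_gt (hc : Ctx M N f n) {s : ℕ} (hs : s < n)
    {u v p a} (hrd : ReadD M f s u v p a) : ∀ e ∈ (f (s+1)).w, p < e.1 := by
  have hsw : SortedT ((f s).w) := by
    have := hc.sorted (show s ≤ n by omega)
    unfold tape at this
    exact this.sublist (List.sublist_append_right _ _)
  rw [hrd.1] at hsw
  have := (sorted_mid hsw).2
  intro e he
  exact this e (by rw [← hrd.2.2.1]; exact he)

lemma readd_u_lt (hc : Ctx M N f n) {s : ℕ} (hs : s < n)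
    {u v p a} (hrd : ReadD M f s u v p a) : ∀ e ∈ u, e.1 < p := by
  have hsw : SortedT ((f s).w) := by
    have := hc.sorted (show s ≤ n by omega)
    unfold tape at this
    exact this.sublist (List.sublist_append_right _ _)
  rw [hrd.1] at hsw
  exact (sorted_mid hsw).1

lemma readd_w_sub (hrd : ReadD M f s u v p a) : (f (s+1)).w <+ (f s).w := by
  rw [hrd.1, hrd.2.2.1]
  exact ((List.sublist_cons_self _ _).trans (List.sublist_append_right _ _))

-- counting
def cnt (f : ℕ → Cfg Q Γ4) (P : ℕ → Prop) [DecidablePred P] (i : ℕ) : ℕ :=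
  (tape (f i)).countP (fun e => decide (P e.1))

variable (P : ℕ → Prop) [DecidablePred P]

lemma cnt_mono (hc : Ctx M N f n) {i j : ℕ} (hij : i ≤ j) (hj : j ≤ n) :
    cnt f P j ≤ cnt f P i :=
  (hc.mono hij hj).countP_le

lemma cnt_step_le (hc : Ctx M N f n) {i : ℕ} (hi : i < n) :
    cnt f P (i+1) ≤ cnt f P i :=
  cnt_mono P hc (by omega) (by omega)

lemma cnt_step_ge (hc : Ctx M N f n) {i : ℕ} (hi : i < n) :
    cnt f P i ≤ cnt f P (i+1) + 1 := by
  rcases step_inv (hc.hrun i hi) with ⟨u, v, p, a, h1, h2, h3, _, _⟩ | ⟨h1, h2⟩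
  · unfold cnt tape
    rw [h1, h2, h3]
    simp only [List.countP_append, List.countP_cons]
    split <;> omega
  · unfold cnt tape
    rw [h1, h2]
    simp [List.countP_append]

lemma cnt_read_of_lt (hc : Ctx M N f n) {i : ℕ} (hi : i < n)
    (hlt : cnt f P (i+1) < cnt f P i) :
    ∃ u v p a, ReadD M f i u v p a ∧ P p := by
  rcases step_inv (hc.hrun i hi) with ⟨u, v, p, a, h1, h2, h3, h4, h5⟩ | ⟨h1, h2⟩
  · refine ⟨u, v, p, a, ⟨h1, h2, h3, h4, h5⟩, ?_⟩
    by_contra hP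
    unfold cnt tape at hlt
    rw [h1, h2, h3] at hlt
    simp only [List.countP_append, List.countP_cons] at hlt
    have : (decide (P p) : Bool) = false := by simpa using hP
    rw [this] at hlt
    simp only [Bool.false_eq_true, if_false] at hlt
    omega
  · exfalso
    unfold cnt tape at hlt
    rw [h1, h2] at hlt
    simp [List.countP_append] at hlt

lemma cnt_drop_card_aux (hc : Ctx M N f n) {u : ℕ} :
    ∀ k, u + k ≤ n →
      cnt f P u = cnt f P (u + k) +
        ((Finset.Ico u (u + k)).filter (fun k => cnt f P (k+1) < cnt f P k)).card := by
  intro k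
  induction k with
  | zero => simp
  | succ k ih =>
    intro hk
    have h1 := ih (by omega)
    have hins : Finset.Ico u (u + (k+1)) = insert (u + k) (Finset.Ico u (u + k)) := by
      have : u + (k + 1) = (u + k) + 1 := by omega
      ext y
      simp only [Finset.mem_Ico, Finset.mem_insert]
      omega
    rw [hins, Finset.filter_insert]
    by_cases hd : cnt f P (u + k + 1) < cnt f P (u + k)
    · rw [if_pos hd, Finset.card_insert_of_notMem (by simp)]
      have hge := cnt_step_ge P hc (show u + k < n by omega)
      have : cnt f P (u + k) = cnt f P (u + k + 1) + 1 := by omega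
      have huk1 : u + (k + 1) = u + k + 1 := by omega
      rw [huk1]
      omega
    · rw [if_neg hd]
      have hle := cnt_step_le P hc (show u + k < n by omega)
      have : cnt f P (u + k) = cnt f P (u + k + 1) := by omega
      have huk1 : u + (k + 1) = u + k + 1 := by omega
      rw [huk1]
      omega

lemma cnt_drop_card (hc : Ctx M N f n) {u v : ℕ} (huv : u ≤ v) (hv : v ≤ n) :
      cnt f P u = cnt f P v +
        ((Finset.Ico u v).filter (fun k => cnt f P (k+1) < cnt f P k)).card := by
  have := cnt_drop_card_aux (u := u) P hc (v - u) (by omega)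
  have hvv : u + (v - u) = v := by omega
  rw [hvv] at this
  exact this

end Run

end NrAux

namespace NrAux

open List

section Run2

set_option linter.constructorNameAsVariable false

variable {Q : Type} {M : NrNFAwtl Q Γ4} {N : ℕ} {f : ℕ → Cfg Q Γ4} {n : ℕ}

lemma mem_keys_iff {A : Type} {l : List (ℕ × A)} {k : ℕ} :
    k ∈ keys l ↔ ∃ e ∈ l, (e : ℕ × A).1 = k := by
  unfold keys
  simp [List.mem_map]

lemma letter_eq_a {e : ℕ × Γ4} (he : e ∈ eW N)
    (h : e.1 < N ∨ (N < e.1 ∧ e.1 ≤ 2*N)) : e.2 = Γ4.a := by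
  rcases mem_eW_cases he with ⟨_,h'⟩|⟨h1,_⟩|⟨_,_,h'⟩|⟨h1,h2,_⟩|⟨h1,_⟩|⟨h1,h2,_⟩ <;>
    first | exact h' | omega

lemma letter_eq_c {e : ℕ × Γ4} (he : e ∈ eW N)
    (h : (2*N < e.1 ∧ e.1 ≤ 3*N) ∨ 3*N+1 < e.1) : e.2 = Γ4.c := by
  rcases mem_eW_cases he with ⟨h1,_⟩|⟨h1,_⟩|⟨h1,h2,_⟩|⟨_,_,h'⟩|⟨h1,_⟩|⟨_,_,h'⟩ <;>
    first | exact h' | omega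

lemma letter_gt2N {e : ℕ × Γ4} (he : e ∈ eW N)
    (hne : e.1 ≠ N) (hna : e.2 ≠ Γ4.a) : 2*N < e.1 := by
  rcases mem_eW_cases he with ⟨h1,h'⟩|⟨h1,_⟩|⟨h1,h2,h'⟩|⟨h1,h2,_⟩|⟨h1,_⟩|⟨h1,h2,_⟩ <;>
    first | exact absurd h' hna | omega

lemma letter_le2N {e : ℕ × Γ4} (he : e ∈ eW N)
    (hne : e.1 ≠ 3*N+1) (hnc : e.2 ≠ Γ4.c) : e.1 ≤ 2*N := by
  rcases mem_eW_cases he with ⟨h1,h'⟩|⟨h1,_⟩|⟨h1,h2,h'⟩|⟨h1,h2,h'⟩|⟨h1,_⟩|⟨h1,h2,h'⟩ <;>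
    first | exact absurd h' hnc | omega

lemma death (hc : Ctx M N f n) {r i j : ℕ} (hij : i ≤ j) (hj : j ≤ n)
    (h1 : r ∈ keys (tape (f i))) (h2 : r ∉ keys (tape (f j))) :
    ∃ s, i ≤ s ∧ s < j ∧ r ∈ keys (tape (f s)) ∧ r ∉ keys (tape (f (s+1))) := by
  induction j with
  | zero =>
    exfalso
    have : i = 0 := by omega
    rw [this] at h1
    exact h2 h1
  | succ j ih =>
    have hij' : i ≤ j := by
      rcases Nat.lt_or_ge i (j+1) with h | h
      · omega
      · exfalso; have : i = j + 1 := by omega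
        rw [this] at h1; exact h2 h1
    by_cases hr : r ∈ keys (tape (f j))
    · exact ⟨j, hij', by omega, hr, h2⟩
    · obtain ⟨s, hs1, hs2, hs3, hs4⟩ := ih hij' (by omega) hr
      exact ⟨s, hs1, by omega, hs3, hs4⟩

lemma kill_read (hc : Ctx M N f n) {s r : ℕ} (hs : s < n)
    (h1 : r ∈ keys (tape (f s))) (h2 : r ∉ keys (tape (f (s+1)))) :
    ∃ u v a, ReadD M f s u v r a := by
  rcases step_inv (hc.hrun s hs) with ⟨u, v, p, a, e1, e2, e3, e4, e5⟩ | ⟨e1, e2⟩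
  · have htape : tape (f s) = ((f s).x ++ u) ++ (p, a) :: v :=
      (tape_read ⟨e1, e2, e3, e4, e5⟩).1
    have htape' : tape (f (s+1)) = ((f s).x ++ u) ++ v :=
      (tape_read ⟨e1, e2, e3, e4, e5⟩).2
    have hrp : r = p := by
      by_contra hne
      obtain ⟨e, he, hek⟩ := mem_keys_iff.1 h1
      rw [htape] at he
      apply h2
      rw [htape']
      apply mem_keys_iff.2
      rcases List.mem_append.1 he with hxu | hpv
      · exact ⟨e, List.mem_append_left _ hxu, hek⟩
      · rcases List.mem_cons.1 hpv with rfl | hv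
        · exact absurd hek.symm (by simpa using hne)
        · exact ⟨e, List.mem_append_right _ hv, hek⟩
    exact ⟨u, v, a, by rw [hrp]; exact ⟨e1, e2, e3, e4, e5⟩⟩
  · exfalso
    apply h2
    have : tape (f (s+1)) = tape (f s) := by
      unfold tape; rw [e1, e2]; simp
    rw [this]
    exact h1

lemma noG (hc : Ctx M N f n) {i0 j0 s : ℕ} (hi0b : Bdy f i0)
    (h1 : i0 ≤ s) (h2 : s < j0) (hj0 : j0 ≤ n)
    (hnb : ∀ k, i0 < k → k < j0 → ¬ Bdy f k)
    (hA : ∃ e ∈ tape (f j0), (e : ℕ × Γ4).1 < N)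
    (hb : (N ∈ keys (tape (f j0))) ∨ (N ∉ keys (tape (f i0))))
    {u v : List (ℕ × Γ4)} {p : ℕ} {a : Γ4} (hrd : ReadD M f s u v p a)
    (hp1 : N < p) (hp2 : p ≤ 2*N) : False := by
  obtain ⟨eα, heα, hpα⟩ := hA
  have hpαj : eα.1 ∈ keys (tape (f j0)) := mem_keys_iff.2 ⟨eα, heα, rfl⟩
  have hsn : s < n := by omega
  have INV : ∀ k, i0 ≤ k → k ≤ s →
      (eα.1 ∈ keys ((f k).w) ∨ ∀ e ∈ (f k).w, 2*N < (e : ℕ × Γ4).1) := by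
    intro k hk
    induction k, hk using Nat.le_induction with
    | base =>
      intro _
      left
      have : tape (f j0) <+ tape (f i0) := hc.mono (by omega) hj0
      rw [tape_eq_w_of_bdy hi0b] at this
      exact mem_keys_of_sublist this hpαj
    | succ k hk ih =>
      intro hk1
      have Pk := ih (by omega)
      obtain ⟨u', v', p', a', hrd'⟩ := step_read_of_not_bdy hc (show k < n by omega)
        (hnb (k+1) (by omega) (by omega))
      have hkill := readd_kill hc (show k < n by omega) hrd'
      have hp'N : p' ≠ N := by
        intro hpe
        rcases hb with hb1 | hb2
        · apply hkill; rw [hpe]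
          exact mem_keys_of_sublist (hc.mono (by omega) hj0) hb1
        · apply hb2
          rw [← hpe]
          have hmem : (p', a') ∈ tape (f k) := by
            unfold tape; exact List.mem_append_right _ (readd_mem_w hrd')
          exact mem_keys_of_sublist (hc.mono (by omega) (by omega))
            (mem_keys_iff.2 ⟨(p', a'), hmem, rfl⟩)
      have hpα_alive : eα.1 ∈ keys (tape (f (k+1))) :=
        mem_keys_of_sublist (hc.mono (by omega) hj0) hpαj
      rcases Pk with hL | hR
      · rw [hrd'.1] at hL
        obtain ⟨e', he', hek⟩ := mem_keys_iff.1 hL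
        rcases List.mem_append.1 he' with hu' | hpv
        · -- skipped over an α letter: the read letter cannot be an a
          have he'W : e' ∈ eW N := hc.mem_eW (show k ≤ n by omega) (by
            unfold tape
            refine List.mem_append_right _ ?_
            rw [hrd'.1]
            exact List.mem_append_left _ hu')
          have he'a : e'.2 = Γ4.a := letter_eq_a he'W (Or.inl (by omega))
          have htr : Γ4.a ∈ M.τ (f k).q := by
            have := hrd'.2.2.2.1 e' hu'
            rwa [he'a] at this
          have ha' : a' ≠ Γ4.a := by
            intro h
            exact hrd'.2.2.2.2 (by rw [h]; exact htr)
          have hW' : (p', a') ∈ eW N := readd_mem_eW hc (show k < n by omega) hrd'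
          have hgt : 2*N < p' := letter_gt2N hW' hp'N ha'
          right
          intro e he
          have := readd_w_gt hc (show k < n by omega) hrd' e he
          omega
        · rcases List.mem_cons.1 hpv with rfl | hv
          · exact absurd hpα_alive (by rw [← hek]; exact hkill)
          · left
            rw [hrd'.2.2.1]
            exact mem_keys_iff.2 ⟨e', hv, hek⟩
      · right
        intro e he
        exact hR e ((readd_w_sub hrd').mem he)
  have Ps := INV s h1 le_rfl
  have haW : (p, a) ∈ eW N := readd_mem_eW hc hsn hrd
  have haa : a = Γ4.a := letter_eq_a haW (Or.inr ⟨hp1, hp2⟩)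
  rcases Ps with hL | hR
  · rw [hrd.1] at hL
    obtain ⟨e', he', hek⟩ := mem_keys_iff.1 hL
    rcases List.mem_append.1 he' with hu | hpv
    · have he'W : e' ∈ eW N := hc.mem_eW (show s ≤ n by omega) (by
        unfold tape
        refine List.mem_append_right _ ?_
        rw [hrd.1]
        exact List.mem_append_left _ hu)
      have he'a : e'.2 = Γ4.a := letter_eq_a he'W (Or.inl (by omega))
      have htr : Γ4.a ∈ M.τ (f s).q := by
        have := hrd.2.2.2.1 e' hu
        rwa [he'a] at this
      rw [haa] at hrd
      exact hrd.2.2.2.2 htr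
    · rcases List.mem_cons.1 hpv with rfl | hv
      · simp at hek; omega
      · -- in v : but v-keys are > p > N > eα.1
        have : p < e'.1 := by
          refine readd_w_gt hc hsn hrd e' ?_
          rw [hrd.2.2.1]; exact hv
        omega
  · have := hR (p, a) (readd_mem_w hrd)
    simp at this
    omega

lemma noZ (hc : Ctx M N f n) {i0 j0 s : ℕ} (hi0b : Bdy f i0)
    (h1 : i0 ≤ s) (h2 : s < j0) (hj0 : j0 ≤ n)
    (hnb : ∀ k, i0 < k → k < j0 → ¬ Bdy f k)
    (hD : ∃ e ∈ tape (f j0), 2*N < (e : ℕ × Γ4).1 ∧ (e : ℕ × Γ4).1 ≤ 3*N)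
    (hd : ((3*N+1) ∈ keys (tape (f j0))) ∨ ((3*N+1) ∉ keys (tape (f i0))))
    {u v : List (ℕ × Γ4)} {p : ℕ} {a : Γ4} (hrd : ReadD M f s u v p a)
    (hp1 : 3*N+1 < p) : False := by
  obtain ⟨eδ, heδ, hpδ⟩ := hD
  have hpδj : eδ.1 ∈ keys (tape (f j0)) := mem_keys_iff.2 ⟨eδ, heδ, rfl⟩
  have hsn : s < n := by omega
  have INV : ∀ k, i0 ≤ k → k ≤ s → eδ.1 ∈ keys ((f k).w) := by
    intro k hk
    induction k, hk using Nat.le_induction with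
    | base =>
      intro _
      have : tape (f j0) <+ tape (f i0) := hc.mono (by omega) hj0
      rw [tape_eq_w_of_bdy hi0b] at this
      exact mem_keys_of_sublist this hpδj
    | succ k hk ih =>
      intro hk1
      have Pk := ih (by omega)
      obtain ⟨u', v', p', a', hrd'⟩ := step_read_of_not_bdy hc (show k < n by omega)
        (hnb (k+1) (by omega) (by omega))
      have hkill := readd_kill hc (show k < n by omega) hrd'
      have hp'd : p' ≠ 3*N+1 := by
        intro hpe
        rcases hd with hd1 | hd2
        · apply hkill; rw [hpe]
          exact mem_keys_of_sublist (hc.mono (by omega) hj0) hd1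
        · apply hd2
          rw [← hpe]
          have hmem : (p', a') ∈ tape (f k) := by
            unfold tape; exact List.mem_append_right _ (readd_mem_w hrd')
          exact mem_keys_of_sublist (hc.mono (by omega) (by omega))
            (mem_keys_iff.2 ⟨(p', a'), hmem, rfl⟩)
      have hpδ_alive : eδ.1 ∈ keys (tape (f (k+1))) :=
        mem_keys_of_sublist (hc.mono (by omega) hj0) hpδj
      rw [hrd'.1] at Pk
      obtain ⟨e', he', hek⟩ := mem_keys_iff.1 Pk
      rcases List.mem_append.1 he' with hu' | hpv
      · -- would skip over a live δ letter while reading beyond it: impossible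
        exfalso
        have he'W : e' ∈ eW N := hc.mem_eW (show k ≤ n by omega) (by
          unfold tape
          refine List.mem_append_right _ ?_
          rw [hrd'.1]
          exact List.mem_append_left _ hu')
        have he'c : e'.2 = Γ4.c := letter_eq_c he'W (Or.inl (by omega))
        have htr : Γ4.c ∈ M.τ (f k).q := by
          have := hrd'.2.2.2.1 e' hu'
          rwa [he'c] at this
        have ha' : a' ≠ Γ4.c := by
          intro h
          exact hrd'.2.2.2.2 (by rw [h]; exact htr)
        have hW' : (p', a') ∈ eW N := readd_mem_eW hc (show k < n by omega) hrd'
        have hle : p' ≤ 2*N := letter_le2N hW' hp'd ha'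
        have hlt : e'.1 < p' := readd_u_lt hc (show k < n by omega) hrd' e' hu'
        omega
      · rcases List.mem_cons.1 hpv with rfl | hv
        · exact absurd hpδ_alive (by rw [← hek]; exact hkill)
        · rw [hrd'.2.2.1]
          exact mem_keys_iff.2 ⟨e', hv, hek⟩
  have Ps := INV s h1 le_rfl
  have haW : (p, a) ∈ eW N := readd_mem_eW hc hsn hrd
  have haa : a = Γ4.c := letter_eq_c haW (Or.inr hp1)
  rw [hrd.1] at Ps
  obtain ⟨e', he', hek⟩ := mem_keys_iff.1 Ps
  rcases List.mem_append.1 he' with hu | hpv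
  · have he'W : e' ∈ eW N := hc.mem_eW (show s ≤ n by omega) (by
      unfold tape
      refine List.mem_append_right _ ?_
      rw [hrd.1]
      exact List.mem_append_left _ hu)
    have he'c : e'.2 = Γ4.c := letter_eq_c he'W (Or.inl (by omega))
    have htr : Γ4.c ∈ M.τ (f s).q := by
      have := hrd.2.2.2.1 e' hu
      rwa [he'c] at this
    rw [haa] at hrd
    exact hrd.2.2.2.2 htr
  · rcases List.mem_cons.1 hpv with rfl | hv
    · simp at hek; omega
    · have hsw : SortedT ((f s).w) := by
        have := hc.sorted (show s ≤ n by omega)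
        unfold tape at this
        exact this.sublist (List.sublist_append_right _ _)
      rw [hrd.1] at hsw
      have := (sorted_mid hsw).2 e' hv
      omega

end Run2

end NrAux

namespace NrAux

open List

section Run3

set_option linter.constructorNameAsVariable false
set_option linter.unusedSectionVars false
set_option maxHeartbeats 1000000

variable {Q : Type} {M : NrNFAwtl Q Γ4} {N : ℕ} {f : ℕ → Cfg Q Γ4} {n : ℕ}

lemma blk_snd (s nn : ℕ) (x : Γ4) :
    ((List.range' s nn).map (fun p => (p, x))).map Prod.snd = List.replicate nn x := by
  rw [List.map_map]
  have h1 : ((List.range' s nn).map (Prod.snd ∘ fun p => (p, x))) =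
      (List.range' s nn).map (fun _ => x) := by
    simp [Function.comp_def]
  rw [h1, List.map_const']
  simp

lemma snd_eW (N : ℕ) : (eW N).map Prod.snd =
    List.replicate N Γ4.a ++ [Γ4.b] ++ List.replicate N Γ4.a ++
    List.replicate N Γ4.c ++ [Γ4.d] ++ List.replicate N Γ4.c := by
  unfold eW blkA blkG blkD blkZ
  simp only [List.map_append, blk_snd]
  rfl

lemma one_key {L : List (ℕ × Γ4)} (hnd : (keys L).Nodup) {k : ℕ} (hk : k ∈ keys L) :
    (erL {k} L).length + 1 = L.length := by
  induction L with
  | nil => simp [keys] at hk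
  | cons hd tl ih =>
    have hnd1 : hd.1 ∉ keys tl := by
      unfold keys at hnd ⊢
      simp only [List.map_cons, List.nodup_cons] at hnd
      exact hnd.1
    have hnd2 : (keys tl).Nodup := by
      unfold keys at hnd ⊢
      simp only [List.map_cons, List.nodup_cons] at hnd
      exact hnd.2
    by_cases hkey : hd.1 = k
    · unfold erL
      rw [List.filter_cons_of_neg (by simp [hkey])]
      have h2 : List.filter (fun e => decide (e.1 ∉ ({k} : Finset ℕ))) tl = tl := by
        rw [List.filter_eq_self]
        intro e he
        simp only [Finset.mem_singleton, decide_eq_true_eq]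
        intro hek
        apply hnd1
        rw [hkey, ← hek]
        exact mem_keys_iff.2 ⟨e, he, rfl⟩
      rw [h2]
      simp
    · have hk' : k ∈ keys tl := by
        unfold keys at hk
        simp only [List.map_cons, List.mem_cons] at hk
        rcases hk with h | h
        · exact absurd h.symm hkey
        · exact h
      unfold erL
      rw [List.filter_cons_of_pos (by simp [hkey])]
      have := ih hnd2 hk'
      unfold erL at this
      simp only [List.length_cons]
      omega

lemma len_eW (N : ℕ) : (eW N).length = 4*N+2 := by
  unfold eW blkA blkG blkD blkZ
  simp
  omega

lemma badword (hc : Ctx M N f n) {R : Finset ℕ}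
    (hz : ∀ r ∈ R, r < N ∨ (2*N < r ∧ r ≤ 3*N)) (hne : R.Nonempty)
    (hmem : ((erL R (eW N)).map Prod.snd) ∈ M.lang) : False := by
  have hGsame : erL R (blkG N) = blkG N := by
    rw [erL, List.filter_eq_self]
    intro e he
    simp only [decide_eq_true_eq]
    intro heR
    have := mem_blk (s := N+1) (n := N) he
    have := hz e.1 heR
    omega
  have hZsame : erL R (blkZ N) = blkZ N := by
    rw [erL, List.filter_eq_self]
    intro e he
    simp only [decide_eq_true_eq]
    intro heR
    have := mem_blk (s := 3*N+2) (n := N) he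
    have := hz e.1 heR
    omega
  have hbsame : erL R [(N, Γ4.b)] = [(N, Γ4.b)] := by
    rw [erL, List.filter_eq_self]
    intro e he
    simp only [List.mem_singleton] at he
    subst he
    simp only [decide_eq_true_eq]
    intro heR
    have := hz N heR
    omega
  have hdsame : erL R [(3*N+1, Γ4.d)] = [(3*N+1, Γ4.d)] := by
    rw [erL, List.filter_eq_self]
    intro e he
    simp only [List.mem_singleton] at he
    subst he
    simp only [decide_eq_true_eq]
    intro heR
    have := hz (3*N+1) heR
    omega
  have hsplit : erL R (eW N) = erL R (blkA N) ++ [(N, Γ4.b)] ++ blkG N ++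
      erL R (blkD N) ++ [(3*N+1, Γ4.d)] ++ blkZ N := by
    unfold eW
    rw [erL_append, erL_append, erL_append, erL_append, erL_append,
      hGsame, hZsame, hbsame, hdsame]
  set n₁ := (erL R (blkA N)).length with hn₁
  set n₂ := (erL R (blkD N)).length with hn₂
  have hA : (erL R (blkA N)).map Prod.snd = List.replicate n₁ Γ4.a := by
    have : ∀ y ∈ (erL R (blkA N)).map Prod.snd, y = Γ4.a := by
      intro y hy
      obtain ⟨e, he, rfl⟩ := List.mem_map.1 hy
      have := mem_blk (s := 0) (n := N) (List.mem_of_mem_filter he)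
      exact this.2.2
    have h2 := List.eq_replicate_of_mem this
    rwa [List.length_map] at h2
  have hD : (erL R (blkD N)).map Prod.snd = List.replicate n₂ Γ4.c := by
    have : ∀ y ∈ (erL R (blkD N)).map Prod.snd, y = Γ4.c := by
      intro y hy
      obtain ⟨e, he, rfl⟩ := List.mem_map.1 hy
      have := mem_blk (s := 2*N+1) (n := N) (List.mem_of_mem_filter he)
      exact this.2.2
    have h2 := List.eq_replicate_of_mem this
    rwa [List.length_map] at h2
  have hword : (erL R (eW N)).map Prod.snd =
      List.replicate n₁ Γ4.a ++ [Γ4.b] ++ List.replicate N Γ4.a ++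
      (List.replicate n₂ Γ4.c ++ [Γ4.d] ++ List.replicate N Γ4.c) := by
    rw [hsplit]
    simp only [List.map_append, hA, hD]
    rw [show (blkG N).map Prod.snd = List.replicate N Γ4.a from blk_snd _ _ _]
    rw [show (blkZ N).map Prod.snd = List.replicate N Γ4.c from blk_snd _ _ _]
    simp [List.append_assoc]
  rw [hword] at hmem
  rw [hc.hlang] at hmem
  have hshape := P2aux.shape_P2 (by
    have : List.replicate n₁ Γ4.a ++ [Γ4.b] ++ List.replicate N Γ4.a ++
        (List.replicate n₂ Γ4.c ++ [Γ4.d] ++ List.replicate N Γ4.c) =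
        List.replicate n₁ Γ4.a ++ [Γ4.b] ++ List.replicate N Γ4.a ++
        (List.replicate n₂ Γ4.c ++ [Γ4.d] ++ List.replicate N Γ4.c) := rfl
    exact hmem)
  obtain ⟨h1, h2⟩ := hshape
  -- h1 : n₁ = N, h2 : N = n₂
  obtain ⟨r, hr⟩ := hne
  rcases hz r hr with hrA | hrD
  · have hmem' : (r, Γ4.a) ∈ blkA N := by
      unfold blkA
      exact List.mem_map.2 ⟨r, List.mem_range'_1.2 ⟨by omega, by omega⟩, rfl⟩
    have : n₁ < (blkA N).length := by
      rw [hn₁, erL]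
      rw [List.length_filter_lt_length_iff_exists]
      exact ⟨(r, Γ4.a), hmem', by simp [hr]⟩
    have : (blkA N).length = N := by unfold blkA; simp
    omega
  · have hmem' : (r, Γ4.c) ∈ blkD N := by
      unfold blkD
      exact List.mem_map.2 ⟨r, List.mem_range'_1.2 ⟨by omega, by omega⟩, rfl⟩
    have hlt : n₂ < (blkD N).length := by
      rw [hn₂, erL]
      rw [List.length_filter_lt_length_iff_exists]
      exact ⟨(r, Γ4.c), hmem', by simp [hr]⟩
    have : (blkD N).length = N := by unfold blkD; simp
    omega

lemma win_glue (hc : Ctx M N f n) {t t' : ℕ} (htt : t ≤ t') (ht'n : t' ≤ n)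
    (hx : (f t).x = (f t').x) (hq : (f t).q = (f t').q)
    (hz : ∀ r, r ∈ keys (tape (f t)) → r ∉ keys (tape (f t')) →
      (r < N ∨ (2*N < r ∧ r ≤ 3*N)))
    (hne : ∃ r, r ∈ keys (tape (f t)) ∧ r ∉ keys (tape (f t'))) : False := by
  classical
  set R : Finset ℕ := ((tape (f t)).map Prod.fst).toFinset.filter
    (fun k => k ∉ keys (tape (f t'))) with hR
  have hRdef : ∀ k, k ∈ R ↔ (k ∈ keys (tape (f t)) ∧ k ∉ keys (tape (f t'))) := by
    intro k
    rw [hR]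
    simp only [Finset.mem_filter, List.mem_toFinset]
    unfold keys
    tauto
  obtain ⟨g, mm, hgr, hga, hg0⟩ := glue M hc.hrun hc.hacc (fun i hi => hc.sorted hi)
    htt ht'n hx hq hRdef
  have hgx : (g 0).x = [] := by
    rw [hg0]
    show erL R (f 0).x = []
    rw [hc.hx0]
    rfl
  have hgq : (g 0).q = (f 0).q := by rw [hg0]; rfl
  have hlm := run_lang M hgr hga hc.hI hgx hgq
  have hgw : (g 0).w = erL R (eW N) := by
    rw [hg0]
    show erL R (f 0).w = _
    rw [hc.hw0]
  rw [hgw] at hlm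
  obtain ⟨r0, hr0⟩ := hne
  exact badword hc (fun r hr => hz r ((hRdef r).1 hr).1 ((hRdef r).1 hr).2)
    ⟨r0, (hRdef r0).2 hr0⟩ hlm

lemma win_surv (hc : Ctx M N f n) (hnem : tape (f n) ≠ []) : False := by
  classical
  obtain ⟨e, he⟩ := List.exists_mem_of_ne_nil _ hnem
  set R : Finset ℕ := {e.1} with hR
  have hRk : ∀ r ∈ R, r ∈ keys (tape (f n)) := by
    intro r hr
    rw [hR, Finset.mem_singleton] at hr
    subst hr
    exact mem_keys_iff.2 ⟨e, he, rfl⟩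
  obtain ⟨hgr, hga⟩ := erase_run M hc.hrun hc.hacc (fun i hi => hc.sorted hi) R hRk
  have hlm := run_lang M (f := fun i => erC R (f i)) hgr hga (q₀ := (f 0).q) hc.hI
    (by show erL R (f 0).x = []; rw [hc.hx0]; rfl) rfl
  have hgw : (erC R (f 0)).w = erL R (eW N) := by
    show erL R (f 0).w = _
    rw [hc.hw0]
  rw [hgw] at hlm
  rw [hc.hlang] at hlm
  have heven := P2aux.even_length_of_P2 hlm
  have hkey : e.1 ∈ keys (eW N) := by
    refine mem_keys_of_sublist (hc.sub le_rfl) ?_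
    exact mem_keys_iff.2 ⟨e, he, rfl⟩
  have hlen := one_key (sorted_keys_nodup (sorted_eW N)) hkey
  rw [← hR] at hlen
  rw [len_eW] at hlen
  rw [List.length_map] at heven
  obtain ⟨c, hcc⟩ := heven
  omega

lemma allread (hc : Ctx M N f n) : tape (f n) = [] := by
  by_contra h
  exact win_surv hc h

lemma readD_unique {s : ℕ} {u1 v1 u2 v2 : List (ℕ × Γ4)} {p1 p2 : ℕ} {a1 a2 : Γ4}
    (h1 : ReadD M f s u1 v1 p1 a1) (h2 : ReadD M f s u2 v2 p2 a2) : p1 = p2 := by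
  have ev : v1 = v2 := h1.2.2.1.symm.trans h2.2.2.1
  have e1 : u1 ++ (p1,a1)::v1 = u2 ++ (p2,a2)::v2 := h1.1.symm.trans h2.1
  have hlen : u1.length = u2.length := by
    have := congrArg List.length e1
    simp only [List.length_append, List.length_cons, ev] at this
    omega
  obtain ⟨-, h⟩ := List.append_inj e1 hlen
  simp only [List.cons.injEq, Prod.mk.injEq] at h
  exact h.1.1

def PZ (lo len : ℕ) : ℕ → Prop := fun p => lo ≤ p ∧ p < lo + len

instance (lo len : ℕ) : DecidablePred (PZ lo len) := by
  intro p
  unfold PZ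
  infer_instance

lemma cap_core [Fintype Q] (hc : Ctx M N f n) {lo len : ℕ} {ltr : Γ4}
    (hlet : ∀ e : ℕ × Γ4, e ∈ eW N → lo ≤ e.1 → e.1 < lo + len → e.2 = ltr)
    (hzone : ∀ r, lo ≤ r → r < lo + len → (r < N ∨ (2*N < r ∧ r ≤ 3*N)))
    {u0 v0 : ℕ} (hv0 : v0 ≤ n)
    (hnbd : ∀ k, u0 < k → k < v0 → ¬ Bdy f k)
    {s s' : ℕ} (hus : u0 ≤ s) (hss : s < s') (hsv : s' < v0)
    (hds : cnt f (PZ lo len) (s+1) < cnt f (PZ lo len) s)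
    (hds' : cnt f (PZ lo len) (s'+1) < cnt f (PZ lo len) s')
    (hqq : (f (s+1)).q = (f (s'+1)).q) : False := by
  obtain ⟨us, vs, ps, az, hrds, hPs⟩ := cnt_read_of_lt (PZ lo len) hc (by omega) hds
  obtain ⟨us', vs', ps', az', hrds', hPs'⟩ := cnt_read_of_lt (PZ lo len) hc (by omega) hds'
  unfold PZ at hPs hPs'
  have RD : ∀ k, s ≤ k → k ≤ s' → ∃ u v p a, ReadD M f k u v p a := by
    intro k h1 h2
    rcases Nat.eq_or_lt_of_le h2 with rfl | hk2
    · exact ⟨us', vs', ps', az', hrds'⟩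
    rcases Nat.eq_or_lt_of_le h1 with rfl | hk1
    · exact ⟨us, vs, ps, az, hrds⟩
    · exact step_read_of_not_bdy hc (by omega) (hnbd (k+1) (by omega) (by omega))
  have WDEC : ∀ k1, s ≤ k1 → ∀ k2, k1 ≤ k2 → k2 ≤ s'+1 → (f k2).w <+ (f k1).w := by
    intro k1 h1 k2 h12
    induction k2, h12 using Nat.le_induction with
    | base => intro _; exact List.Sublist.refl _
    | succ k2 hk2 ih =>
      intro h2
      obtain ⟨u', v', p', a', hrd'⟩ := RD k2 (by omega) (by omega)
      exact (readd_w_sub hrd').trans (ih (by omega))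
  have LAB : ∀ k, s < k → k ≤ s' → ∀ u' v' p' a', ReadD M f k u' v' p' a' →
      (lo ≤ p' ∧ p' < lo + len) ∧ u' = [] := by
    intro k hk1 hk2 u' v' p' a' hrd'
    have hkn : k < n := by omega
    have hw_k : (f k).w <+ (f (s+1)).w := WDEC (s+1) (by omega) k (by omega) (by omega)
    have hp'_gt : ps < p' := by
      have hp'mem : p' ∈ keys ((f k).w) := mem_keys_iff.2 ⟨(p',a'), readd_mem_w hrd', rfl⟩
      have hmem : p' ∈ keys ((f (s+1)).w) := mem_keys_of_sublist hw_k hp'mem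
      obtain ⟨e, he, hek⟩ := mem_keys_iff.1 hmem
      have := readd_w_gt hc (by omega) hrds e he
      omega
    have hp'_le : p' ≤ ps' := by
      rcases Nat.eq_or_lt_of_le hk2 with rfl | hlt
      · have := readD_unique hrd' hrds'
        omega
      · have hmem : ps' ∈ keys ((f (k+1)).w) := by
          have h1 : (f s').w <+ (f (k+1)).w := WDEC (k+1) (by omega) s' (by omega) (by omega)
          exact mem_keys_of_sublist h1
            (mem_keys_iff.2 ⟨(ps', az'), readd_mem_w hrds', rfl⟩)
        obtain ⟨e, he, hek⟩ := mem_keys_iff.1 hmem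
        have := readd_w_gt hc hkn hrd' e he
        omega
    refine ⟨⟨by omega, by omega⟩, ?_⟩
    cases hu' : u' with
    | nil => rfl
    | cons e u'' =>
      exfalso
      subst hu'
      have he_mem_w : e ∈ (f k).w := by
        rw [hrd'.1]; simp
      have he_s1 : ps < e.1 := by
        have := readd_w_gt hc (by omega) hrds e (hw_k.mem he_mem_w)
        omega
      have he_lt : e.1 < p' := readd_u_lt hc hkn hrd' e (by simp)
      have heW : e ∈ eW N := hc.mem_eW (show k ≤ n by omega) (by
        unfold tape
        exact List.mem_append_right _ he_mem_w)
      have hel : e.2 = ltr := hlet e heW (by omega) (by omega)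
      have htr : ltr ∈ M.τ (f k).q := by
        have := hrd'.2.2.2.1 e (by simp)
        rwa [hel] at this
      have haW : (p', a') ∈ eW N := readd_mem_eW hc hkn hrd'
      have ha' : a' = ltr := hlet _ haW (by omega) (by omega)
      exact hrd'.2.2.2.2 (by rw [ha']; exact htr)
  have XC : ∀ k, s+1 ≤ k → k ≤ s'+1 → (f k).x = (f (s+1)).x := by
    intro k hk
    induction k, hk using Nat.le_induction with
    | base => intro _; rfl
    | succ k hk ih =>
      intro h2
      obtain ⟨u', v', p', a', hrd'⟩ := RD k (by omega) (by omega)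
      have hu := (LAB k (by omega) (by omega) u' v' p' a' hrd').2
      rw [hrd'.2.1, hu, List.append_nil]
      exact ih (by omega)
  refine win_glue hc (t := s+1) (t' := s'+1) (by omega) (by omega)
    (XC (s'+1) (by omega) le_rfl).symm hqq ?_ ?_
  · intro r hr1 hr2
    obtain ⟨k, hk1, hk2, hk3, hk4⟩ := death hc (i := s+1) (j := s'+1)
      (by omega) (by omega) hr1 hr2
    obtain ⟨u', v', a', hrd'⟩ := kill_read hc (by omega) hk3 hk4
    have := (LAB k (by omega) (by omega) u' v' r a' hrd').1
    exact hzone r this.1 this.2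
  · refine ⟨ps', ?_, readd_kill hc (by omega) hrds'⟩
    have h1 : (ps', az') ∈ tape (f s') := by
      unfold tape
      exact List.mem_append_right _ (readd_mem_w hrds')
    exact mem_keys_of_sublist (hc.mono (show s+1 ≤ s' by omega) (by omega))
      (mem_keys_iff.2 ⟨(ps', az'), h1, rfl⟩)

lemma cap [Fintype Q] (hc : Ctx M N f n) {lo len : ℕ} {ltr : Γ4}
    (hlet : ∀ e : ℕ × Γ4, e ∈ eW N → lo ≤ e.1 → e.1 < lo + len → e.2 = ltr)
    (hzone : ∀ r, lo ≤ r → r < lo + len → (r < N ∨ (2*N < r ∧ r ≤ 3*N)))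
    {u0 v0 : ℕ} (hu0 : u0 ≤ v0) (hv0 : v0 ≤ n)
    (hnbd : ∀ k, u0 < k → k < v0 → ¬ Bdy f k) :
    cnt f (PZ lo len) u0 ≤ cnt f (PZ lo len) v0 + Fintype.card Q := by
  classical
  by_contra hcon
  push_neg at hcon
  have hdrop := cnt_drop_card (PZ lo len) hc hu0 hv0
  set F := (Finset.Ico u0 v0).filter
    (fun k => cnt f (PZ lo len) (k+1) < cnt f (PZ lo len) k) with hF
  have hcard : Fintype.card Q < F.card := by omega
  obtain ⟨s, hs, s', hs', hne, heq⟩ := Finset.exists_ne_map_eq_of_card_lt_of_maps_to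
    (t := (Finset.univ : Finset Q)) (by simpa using hcard)
    (fun x _ => Finset.mem_univ ((f (x+1)).q))
  rw [hF, Finset.mem_filter, Finset.mem_Ico] at hs hs'
  rcases Nat.lt_or_ge s s' with h | h
  · exact cap_core hc hlet hzone hv0 hnbd hs.1.1 h hs'.1.2 hs.2 hs'.2 heq
  · have hlt : s' < s := by omega
    exact cap_core hc hlet hzone hv0 hnbd hs'.1.1 hlt hs.1.2 hs'.2 hs.2 heq.symm

end Run3

end NrAux

namespace NrAux

open List

section Run4

set_option linter.constructorNameAsVariable false
set_option linter.unusedSectionVars false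
set_option maxHeartbeats 1000000

variable {Q : Type} {M : NrNFAwtl Q Γ4} {N : ℕ} {f : ℕ → Cfg Q Γ4} {n : ℕ}

lemma bdy_below {i s : ℕ} (hi : Bdy f i) (his : i ≤ s) :
    ∃ i0, i ≤ i0 ∧ i0 ≤ s ∧ Bdy f i0 ∧ ∀ k, i0 < k → k ≤ s → ¬ Bdy f k := by
  classical
  have hspec := Nat.findGreatest_spec (P := fun k => Bdy f k ∧ i ≤ k)
    (m := i) his ⟨hi, le_rfl⟩
  refine ⟨Nat.findGreatest (fun k => Bdy f k ∧ i ≤ k) s, hspec.2,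
    Nat.findGreatest_le s, hspec.1, ?_⟩
  intro k hk1 hk2 hbk
  exact (Nat.findGreatest_is_greatest (P := fun k => Bdy f k ∧ i ≤ k) hk1 hk2)
    ⟨hbk, by omega⟩

lemma bdy_above {j s : ℕ} (hj : Bdy f j) (hsj : s < j) :
    ∃ j0, s < j0 ∧ j0 ≤ j ∧ Bdy f j0 ∧ ∀ k, s < k → k < j0 → ¬ Bdy f k := by
  classical
  have hex : ∃ k, s < k ∧ k ≤ j ∧ Bdy f k := ⟨j, hsj, le_rfl, hj⟩
  refine ⟨Nat.find hex, (Nat.find_spec hex).1, (Nat.find_spec hex).2.1,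
    (Nat.find_spec hex).2.2, ?_⟩
  intro k h1 h2 hbk
  have hkj : k ≤ j := by
    have h3 : Nat.find hex ≤ j := Nat.find_le ⟨hsj, le_rfl, hj⟩
    omega
  exact (Nat.find_min hex h2) ⟨h1, hkj, hbk⟩

lemma main_pump [Fintype Q] (hc : Ctx M N f n) {i j : ℕ}
    (hbi : Bdy f i) (hbj : Bdy f j) (hij : i < j) (hjn : j ≤ n)
    (hq : (f i).q = (f j).q)
    (hbl : (N ∈ keys (tape (f i))) ↔ (N ∈ keys (tape (f j))))
    (hdl : ((3*N+1) ∈ keys (tape (f i))) ↔ ((3*N+1) ∈ keys (tape (f j))))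
    (hA : ∃ e ∈ tape (f j), (e : ℕ × Γ4).1 < N)
    (hD : ∃ e ∈ tape (f j), 2*N < (e : ℕ × Γ4).1 ∧ (e : ℕ × Γ4).1 ≤ 3*N)
    (htne : tape (f i) ≠ tape (f j)) : False := by
  have hxx : (f i).x = (f j).x := by
    have h1 : (f i).x = [] := hbi
    have h2 : (f j).x = [] := hbj
    rw [h1, h2]
  refine win_glue hc (le_of_lt hij) hjn hxx hq ?_ ?_
  · intro r hr1 hr2
    obtain ⟨s, hs1, hs2, hs3, hs4⟩ := death hc (le_of_lt hij) hjn hr1 hr2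
    obtain ⟨u', v', a', hrd'⟩ := kill_read hc (by omega) hs3 hs4
    have hrW : ∃ e ∈ eW N, (e : ℕ × Γ4).1 = r := by
      obtain ⟨e, he, hek⟩ := mem_keys_iff.1 hr1
      exact ⟨e, hc.mem_eW (by omega) he, hek⟩
    obtain ⟨e, heW, hek⟩ := hrW
    have hcases := mem_eW_cases heW
    rw [hek] at hcases
    have hrb : r ≠ N := by
      intro hre
      by_cases hNi : N ∈ keys (tape (f i))
      · apply hs4
        rw [hre]
        exact mem_keys_of_sublist (hc.mono (show s+1 ≤ j by omega) hjn) (hbl.1 hNi)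
      · apply hNi
        rw [← hre]
        exact hr1
    have hrd4 : r ≠ 3*N+1 := by
      intro hre
      by_cases hdi : (3*N+1) ∈ keys (tape (f i))
      · apply hs4
        rw [hre]
        exact mem_keys_of_sublist (hc.mono (show s+1 ≤ j by omega) hjn) (hdl.1 hdi)
      · apply hdi
        rw [← hre]
        exact hr1
    obtain ⟨i0, hi0a, hi0b, hi0c, hi0d⟩ := bdy_below (i := i) (s := s) hbi hs1
    obtain ⟨j0, hj0a, hj0b, hj0c, hj0d⟩ := bdy_above (j := j) (s := s) hbj hs2
    have hnb : ∀ k, i0 < k → k < j0 → ¬ Bdy f k := by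
      intro k h1 h2
      rcases le_or_gt k s with h | h
      · exact hi0d k h1 h
      · exact hj0d k h h2
    have hnγ : ¬ (N < r ∧ r ≤ 2*N) := by
      rintro ⟨h1, h2⟩
      refine noG hc hi0c hi0b hj0a (le_trans hj0b hjn) hnb ?_ ?_ hrd' h1 h2
      · obtain ⟨e2, he2, hke⟩ := hA
        exact ⟨e2, (hc.mono hj0b hjn).mem he2, hke⟩
      · by_cases hNi : N ∈ keys (tape (f i))
        · exact Or.inl (mem_keys_of_sublist (hc.mono hj0b hjn) (hbl.1 hNi))
        · refine Or.inr fun hmm => hNi ?_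
          exact mem_keys_of_sublist (hc.mono hi0a (by omega)) hmm
    have hnζ : ¬ (3*N+1 < r) := by
      intro h1
      refine noZ hc hi0c hi0b hj0a (le_trans hj0b hjn) hnb ?_ ?_ hrd' h1
      · obtain ⟨e2, he2, hke⟩ := hD
        exact ⟨e2, (hc.mono hj0b hjn).mem he2, hke⟩
      · by_cases hdi : (3*N+1) ∈ keys (tape (f i))
        · exact Or.inl (mem_keys_of_sublist (hc.mono hj0b hjn) (hdl.1 hdi))
        · refine Or.inr fun hmm => hdi ?_
          exact mem_keys_of_sublist (hc.mono hi0a (by omega)) hmm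
    rcases hcases with ⟨h1,_⟩|⟨h1,_⟩|⟨h1,h2,_⟩|⟨h1,h2,_⟩|⟨h1,_⟩|⟨h1,h2,_⟩
    · exact Or.inl h1
    · exact absurd h1 hrb
    · exact absurd ⟨h1, h2⟩ hnγ
    · exact Or.inr ⟨h1, h2⟩
    · exact absurd h1 hrd4
    · exact absurd h1 hnζ
  · by_contra hcon
    push_neg at hcon
    apply htne
    refine subdet (LL := eW N) (sorted_keys_nodup (sorted_eW N))
      (hc.sub (by omega)) (hc.sub hjn) ?_
    intro k
    constructor
    · intro hk
      by_contra hk2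
      exact hk2 (hcon k hk)
    · intro hk
      exact mem_keys_of_sublist (hc.mono (le_of_lt hij) hjn) hk

def cA (N : ℕ) (f : ℕ → Cfg Q Γ4) (i : ℕ) : ℕ := cnt f (PZ 0 N) i
def cD (N : ℕ) (f : ℕ → Cfg Q Γ4) (i : ℕ) : ℕ := cnt f (PZ (2*N+1) N) i

lemma cA0 (hc : Ctx M N f n) : cA N f 0 = N := by
  unfold cA cnt
  rw [hc.tape0]
  unfold eW
  simp only [List.countP_append]
  unfold blkA
  rw [countP_blk_all (by intro p h1 h2; exact ⟨by omega, by omega⟩)]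
  have h1 : List.countP (fun e => decide (PZ 0 N e.1)) [(N, Γ4.b)] = 0 := by
    rw [List.countP_eq_zero]
    intro e he
    simp only [List.mem_singleton] at he
    subst he
    simp [PZ]
  unfold blkG blkD blkZ
  rw [h1, countP_blk_none (by intro p hp1 hp2; unfold PZ; omega),
    countP_blk_none (by intro p hp1 hp2; unfold PZ; omega),
    countP_blk_none (by intro p hp1 hp2; unfold PZ; omega)]
  have h2 : List.countP (fun e => decide (PZ 0 N e.1)) [(3*N+1, Γ4.d)] = 0 := by
    rw [List.countP_eq_zero]
    intro e he
    simp only [List.mem_singleton] at he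
    subst he
    simp only [decide_eq_true_eq]
    unfold PZ
    omega
  rw [h2]
  omega

lemma cD0 (hc : Ctx M N f n) : cD N f 0 = N := by
  unfold cD cnt
  rw [hc.tape0]
  unfold eW
  simp only [List.countP_append]
  unfold blkA blkG blkZ
  rw [countP_blk_none (by intro p hp1 hp2; unfold PZ; omega),
    countP_blk_none (by intro p hp1 hp2; unfold PZ; omega),
    countP_blk_none (by intro p hp1 hp2; unfold PZ; omega)]
  unfold blkD
  rw [countP_blk_all (by intro p h1 h2; exact ⟨by omega, by omega⟩)]
  have h1 : List.countP (fun e => decide (PZ (2*N+1) N e.1)) [(N, Γ4.b)] = 0 := by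
    rw [List.countP_eq_zero]
    intro e he
    simp only [List.mem_singleton] at he
    subst he
    simp only [decide_eq_true_eq]
    unfold PZ
    omega
  have h2 : List.countP (fun e => decide (PZ (2*N+1) N e.1)) [(3*N+1, Γ4.d)] = 0 := by
    rw [List.countP_eq_zero]
    intro e he
    simp only [List.mem_singleton] at he
    subst he
    simp only [decide_eq_true_eq]
    unfold PZ
    omega
  rw [h1, h2]
  omega

lemma cAn (hc : Ctx M N f n) : cA N f n = 0 := by
  unfold cA cnt
  rw [allread hc]
  rfl

lemma cDn (hc : Ctx M N f n) : cD N f n = 0 := by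
  unfold cD cnt
  rw [allread hc]
  rfl

lemma bdy_n (hc : Ctx M N f n) : Bdy f n := by
  unfold Bdy
  have := allread hc
  unfold tape at this
  exact List.append_eq_nil_iff.1 this |>.1

lemma next_bdy [Fintype Q] (hc : Ctx M N f n) {i : ℕ} (hbi : Bdy f i) (hin : i ≤ n)
    (hsum : 1 ≤ cA N f i + cD N f i) :
    ∃ j, i < j ∧ j ≤ n ∧ Bdy f j ∧
      cA N f j + cD N f j < cA N f i + cD N f i ∧
      cA N f i + cD N f i ≤ cA N f j + cD N f j + 2*Fintype.card Q := by
  classical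
  have hilt : i < n := by
    rcases Nat.eq_or_lt_of_le hin with rfl | h
    · rw [cAn hc, cDn hc] at hsum; omega
    · exact h
  have hex : ∃ k, i < k ∧ k ≤ n ∧ Bdy f k ∧
      cA N f k + cD N f k < cA N f i + cD N f i :=
    ⟨n, hilt, le_rfl, bdy_n hc, by rw [cAn hc, cDn hc]; omega⟩
  set j := Nat.find hex with hjdef
  have hj := Nat.find_spec hex
  obtain ⟨u, hu1, hu2, hu3, hu4⟩ := bdy_below (i := i) (s := j-1) hbi (by omega)
  have hnb : ∀ k, u < k → k < j → ¬ Bdy f k := by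
    intro k h1 h2 hbk
    exact hu4 k h1 (by omega) hbk
  have hsumu : cA N f u + cD N f u = cA N f i + cD N f i := by
    have hun : u ≤ n := by omega
    have h1 : cA N f u ≤ cA N f i := cnt_mono _ hc hu1 hun
    have h2 : cD N f u ≤ cD N f i := cnt_mono _ hc hu1 hun
    rcases Nat.eq_or_lt_of_le hu1 with rfl | hlt
    · rfl
    · have hmin := Nat.find_min hex (show u < j by omega)
      simp only [not_and, not_lt] at hmin
      have := hmin hlt hun hu3
      omega
  have hcapA : cA N f u ≤ cA N f j + Fintype.card Q := by
    refine cap hc (lo := 0) (len := N) (ltr := Γ4.a)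
      (fun e he _ h2 => letter_eq_a he (Or.inl (by omega)))
      (fun r _ h2 => Or.inl (by omega)) (by omega) hj.2.1 hnb
  have hcapD : cD N f u ≤ cD N f j + Fintype.card Q := by
    refine cap hc (lo := 2*N+1) (len := N) (ltr := Γ4.c)
      (fun e he h1 h2 => letter_eq_c he (Or.inl ⟨by omega, by omega⟩))
      (fun r h1 h2 => Or.inr ⟨by omega, by omega⟩) (by omega) hj.2.1 hnb
  exact ⟨j, hj.1, hj.2.1, hj.2.2.1, hj.2.2.2, by omega⟩

lemma chain [Fintype Q] (hc : Ctx M N f n)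
    (hbig : 8*(Fintype.card Q)*(Fintype.card Q) + 2*Fintype.card Q + 2 ≤ N) :
    ∀ K, K ≤ 4*Fintype.card Q →
    ∃ g : ℕ → ℕ, (∀ l, l ≤ K → Bdy f (g l) ∧ g l ≤ n ∧
        2*N ≤ cA N f (g l) + cD N f (g l) + 2*Fintype.card Q*l) ∧
      (∀ l1 l2, l1 < l2 → l2 ≤ K → g l1 < g l2 ∧
        cA N f (g l2) + cD N f (g l2) < cA N f (g l1) + cD N f (g l1)) := by
  intro K
  induction K with
  | zero =>
    intro _
    refine ⟨fun _ => 0, ?_, ?_⟩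
    · intro l hl
      have hl0 : l = 0 := by omega
      subst hl0
      refine ⟨hc.hx0, Nat.zero_le n, ?_⟩
      show 2*N ≤ cA N f 0 + cD N f 0 + 2*Fintype.card Q*0
      rw [cA0 hc, cD0 hc]
      omega
    · intro l1 l2 h1 h2
      omega
  | succ K ih =>
    intro hK1
    obtain ⟨g, hg1, hg2⟩ := ih (by omega)
    have hgK := hg1 K le_rfl
    have hmK : 2*Fintype.card Q*K ≤ 8*Fintype.card Q*Fintype.card Q := by
      have hK4 : K ≤ 4*Fintype.card Q := by omega
      calc 2*Fintype.card Q*K ≤ 2*Fintype.card Q*(4*Fintype.card Q) :=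
            Nat.mul_le_mul_left _ hK4
        _ = 8*Fintype.card Q*Fintype.card Q := by ring
    have hsumK : 1 ≤ cA N f (g K) + cD N f (g K) := by omega
    obtain ⟨j, hj1, hj2, hj3, hj4, hj5⟩ := next_bdy hc hgK.1 hgK.2.1 hsumK
    refine ⟨fun l => if l ≤ K then g l else j, ?_, ?_⟩
    · intro l hl
      by_cases hlK : l ≤ K
      · simp only [if_pos hlK]
        exact hg1 l hlK
      · simp only [if_neg hlK]
        have hlKe : l = K + 1 := by omega
        refine ⟨hj3, hj2, ?_⟩
        subst hlKe
        have := hgK.2.2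
        calc 2*N ≤ cA N f (g K) + cD N f (g K) + 2*Fintype.card Q*K := this
          _ ≤ (cA N f j + cD N f j + 2*Fintype.card Q) + 2*Fintype.card Q*K := by omega
          _ = cA N f j + cD N f j + 2*Fintype.card Q*(K+1) := by ring
    · intro l1 l2 h1 h2
      by_cases hl2 : l2 ≤ K
      · simp only [if_pos hl2, if_pos (show l1 ≤ K by omega)]
        exact hg2 l1 l2 h1 hl2
      · have hl2e : l2 = K + 1 := by omega
        simp only [if_neg hl2, if_pos (show l1 ≤ K by omega)]
        rcases Nat.eq_or_lt_of_le (show l1 ≤ K by omega) with rfl | hlt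
        · exact ⟨hj1, hj4⟩
        · have h12 := hg2 l1 K hlt le_rfl
          exact ⟨by omega, by omega⟩

lemma cnt_exists_of_pos {P : ℕ → Prop} [DecidablePred P] {i : ℕ}
    (h : 0 < cnt f P i) : ∃ e ∈ tape (f i), P (e : ℕ × Γ4).1 := by
  unfold cnt at h
  rw [List.countP_pos_iff] at h
  obtain ⟨e, he, hP⟩ := h
  exact ⟨e, he, by simpa using hP⟩

lemma final [Fintype Q] (hc : Ctx M N f n)
    (hbig : N = 10*(Fintype.card Q + 1)^2) : False := by
  classical
  have hbig' : 8*(Fintype.card Q)*(Fintype.card Q) + 2*Fintype.card Q + 2 ≤ N := by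
    rw [hbig]
    nlinarith [Nat.zero_le (Fintype.card Q)]
  obtain ⟨g, hg1, hg2⟩ := chain hc hbig' (4*Fintype.card Q) le_rfl
  set φ : Fin (4*Fintype.card Q+1) → Q × Bool × Bool := fun l =>
    ((f (g l)).q, decide (N ∈ keys (tape (f (g l)))),
      decide ((3*N+1) ∈ keys (tape (f (g l))))) with hφ
  have hcard : Fintype.card (Q × Bool × Bool) < Fintype.card (Fin (4*Fintype.card Q+1)) := by
    simp only [Fintype.card_prod, Fintype.card_bool, Fintype.card_fin]
    omega
  obtain ⟨l1, l2, hne, heq⟩ := Fintype.exists_ne_map_eq_of_card_lt φ hcard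
  have key : ∀ l1 l2 : Fin (4*Fintype.card Q+1), l1 < l2 → φ l1 = φ l2 → False := by
    intro l1 l2 hlt heq
    have hl2b : (l2 : ℕ) ≤ 4*Fintype.card Q := by omega
    have h12 := hg2 l1 l2 (by exact_mod_cast hlt) hl2b
    have hi := hg1 l1 (by omega)
    have hj := hg1 l2 hl2b
    rw [hφ] at heq
    simp only [Prod.mk.injEq] at heq
    obtain ⟨hq, hb, hd⟩ := heq
    have hbl : (N ∈ keys (tape (f (g l1)))) ↔ (N ∈ keys (tape (f (g l2)))) :=
      decide_eq_decide.1 hb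
    have hdl : ((3*N+1) ∈ keys (tape (f (g l1)))) ↔ ((3*N+1) ∈ keys (tape (f (g l2)))) :=
      decide_eq_decide.1 hd
    have hDle : cD N f (g l2) ≤ N := by
      have := cnt_mono (PZ (2*N+1) N) hc (show 0 ≤ g l2 by omega) hj.2.1
      have h0 := cD0 hc
      unfold cD at h0 ⊢
      omega
    have hAle : cA N f (g l2) ≤ N := by
      have := cnt_mono (PZ 0 N) hc (show 0 ≤ g l2 by omega) hj.2.1
      have h0 := cA0 hc
      unfold cA at h0 ⊢
      omega
    have hml : 2*Fintype.card Q*(l2 : ℕ) ≤ 8*Fintype.card Q*Fintype.card Q := by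
      calc 2*Fintype.card Q*(l2:ℕ) ≤ 2*Fintype.card Q*(4*Fintype.card Q) :=
            Nat.mul_le_mul_left _ (by omega)
        _ = 8*Fintype.card Q*Fintype.card Q := by ring
    have hApos : 0 < cA N f (g l2) := by omega
    have hDpos : 0 < cD N f (g l2) := by omega
    have hA : ∃ e ∈ tape (f (g l2)), (e : ℕ × Γ4).1 < N := by
      obtain ⟨e, he, hP⟩ := cnt_exists_of_pos (P := PZ 0 N) hApos
      refine ⟨e, he, ?_⟩
      have := hP.2
      omega
    have hD : ∃ e ∈ tape (f (g l2)), 2*N < (e : ℕ × Γ4).1 ∧ (e : ℕ × Γ4).1 ≤ 3*N := by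
      obtain ⟨e, he, hP⟩ := cnt_exists_of_pos (P := PZ (2*N+1) N) hDpos
      exact ⟨e, he, by unfold PZ at hP; omega⟩
    have htne : tape (f (g l1)) ≠ tape (f (g l2)) := by
      intro hcontra
      have : cA N f (g l1) = cA N f (g l2) := by
        unfold cA cnt
        rw [hcontra]
      have : cD N f (g l1) = cD N f (g l2) := by
        unfold cD cnt
        rw [hcontra]
      omega
    exact main_pump hc hi.1 hj.1 h12.1 hj.2.1 hq hbl hdl hA hD htne
  rcases lt_or_gt_of_ne hne with h | h
  · exact key _ _ h heq
  · exact key _ _ h heq.symm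

end Run4

end NrAux


open List in
/-- `P₂` is not accepted by any nrNFAwtl. -/
theorem P2_not_accepted_by_nrNFAwtl : ¬ AcceptedByNrNFAwtl { w | P2 w } := by
  rintro ⟨Q, hQF, M, hlang⟩
  letI : Fintype Q := hQF
  set N := 10*(Fintype.card Q + 1)^2 with hN
  have hab : P2aux.abOnly (replicate N Γ4.a ++ [Γ4.b] ++ replicate N Γ4.a) := by
    intro x hx
    simp only [List.mem_append, List.mem_replicate, List.mem_singleton] at hx
    rcases hx with (⟨_, rfl⟩ | rfl) | ⟨_, rfl⟩
    · exact Or.inl rfl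
    · exact Or.inr rfl
    · exact Or.inl rfl
  have hW : P2 ((NrAux.eW N).map Prod.snd) := by
    rw [NrAux.snd_eW]
    have h := P2aux.P2_of_char hab
    have hrev : ((replicate N Γ4.a ++ [Γ4.b] ++ replicate N Γ4.a).reverse.map P2aux.σ4)
        = replicate N Γ4.c ++ [Γ4.d] ++ replicate N Γ4.c := by
      simp [List.reverse_append, List.map_append, List.map_replicate, P2aux.σ4]
    rw [hrev] at h
    simpa [List.append_assoc] using h
  have hmem : ((NrAux.eW N).map Prod.snd) ∈ M.lang := by
    rw [hlang]
    exact hW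
  obtain ⟨q₀, hq₀, hrtg⟩ := hmem
  have hproj : NrAux.proj (⟨[], q₀, NrAux.eW N⟩ : NrAux.Cfg Q Γ4)
      = NrConf.conf [] q₀ ((NrAux.eW N).map Prod.snd) := by
    simp [NrAux.proj]
  obtain ⟨n, f, hf0, hrun, hacc⟩ := NrAux.lift_run M _ (by rw [hproj]; exact hrtg)
  have hc : NrAux.Ctx M N f n :=
    ⟨hrun, hacc, by rw [hf0], by rw [hf0], by rw [hf0]; exact hq₀, hlang⟩
  exact NrAux.final hc hN
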